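/- arXiv:1706.08582 — 9 statements merged into one kernel-verified Lean document; each statement's English description precedes it below -/
import Mathlib

section
/- Let 1 < p < ∞ and let A₁ ≪ A₂ ≪ ... be diagonal operators on ℓᵖ converging to the identity in SOT (with A₋₁ = A₀ = 0). If (xₙ)ₙ≥₁ is a sequence in ℓᵖ with ∑ₙ ‖xₙ‖ᵖ < ∞ and each xₙ lies in the range of Aₙ₊₁ − Aₙ₋₂, then ‖∑ₙ xₙ‖ᵖ ≤ 4ᵖ ∑ₙ ‖xₙ‖ᵖ. -/
/-!
Write `w n` for the diagonal of `A n`. If `x n` is nonzero at a coordinate `i`, then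
`w (n + 1) i ≠ w (n - 2) i`, and the chain condition `A k ≪ A (k + 1)` forces `w k i = 1` for all
`k > n + 1`; so `x m` vanishes at `i` as soon as `m - 2 > n + 1`. Along each residue class mod 4
the `x n` are therefore disjointly supported, and there `‖·‖ᵖ` is additive. Hölder's inequality
over the four classes bounds every finite partial sum with the constant `4 ^ (p - 1)`, which gives
both the convergence of `∑ xₙ` and the estimate.
-/

open scoped ENNReal

open Finset

namespace lp

variable {α ι : Type*} {E : α → Type*} [∀ a, NormedAddCommGroup (E a)] {p : ℝ≥0∞}

theorem norm_add_rpow_of_disjoint (hp : 0 < p.toReal) {f g : lp E p}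
    (hfg : ∀ a, f a = 0 ∨ g a = 0) :
    ‖f + g‖ ^ p.toReal = ‖f‖ ^ p.toReal + ‖g‖ ^ p.toReal := by
  rw [norm_rpow_eq_tsum hp, norm_rpow_eq_tsum hp, norm_rpow_eq_tsum hp,
    ← Summable.tsum_add ((lp.memℓp f).summable hp) ((lp.memℓp g).summable hp)]
  refine tsum_congr fun a => ?_
  rcases hfg a with h | h <;> simp [h, Real.zero_rpow hp.ne']

theorem norm_sum_rpow_of_pairwise_disjoint (hp : 0 < p.toReal) {f : ι → lp E p}
    {s : Finset ι} (hf : (s : Set ι).Pairwise fun i j => ∀ a, f i a = 0 ∨ f j a = 0) :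
    ‖∑ i ∈ s, f i‖ ^ p.toReal = ∑ i ∈ s, ‖f i‖ ^ p.toReal := by
  classical
  induction s using Finset.induction_on with
  | empty => simp [Real.zero_rpow hp.ne']
  | insert i s hi ih =>
    rw [coe_insert, Set.pairwise_insert] at hf
    rw [sum_insert hi, sum_insert hi, ← ih hf.1]
    refine norm_add_rpow_of_disjoint hp fun a => or_iff_not_imp_left.2 fun hia => ?_
    rw [coeFn_sum, Finset.sum_apply]
    exact sum_eq_zero fun j hj =>
      ((hf.2 j hj fun hij => hi (hij ▸ hj)).1 a).resolve_left hia

theorem norm_sum_rpow_le_of_separated [Fact (1 ≤ p)] (hp : p ≠ ⊤) {f : ℕ → lp E p} {m : ℕ}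
    (hm : 0 < m) (hf : ∀ i j, i + m ≤ j → ∀ a, f i a = 0 ∨ f j a = 0) (s : Finset ℕ) :
    ‖∑ i ∈ s, f i‖ ^ p.toReal ≤ (m : ℝ) ^ (p.toReal - 1) * ∑ i ∈ s, ‖f i‖ ^ p.toReal := by
  have hp1 : 1 ≤ p.toReal := by simpa using ENNReal.toReal_mono hp (Fact.out : 1 ≤ p)
  have hmaps : ∀ i ∈ s, i % m ∈ range m := fun i _ => mem_range.2 (Nat.mod_lt i hm)
  have hgap : ∀ i k, i % m = k % m → i < k → i + m ≤ k := fun i k hmod hik => by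
    have := Nat.le_of_dvd (by omega) ((Nat.modEq_iff_dvd' hik.le).1 hmod)
    omega
  have hclass : ∀ j, ‖∑ i ∈ s with i % m = j, f i‖ ^ p.toReal
      = ∑ i ∈ s with i % m = j, ‖f i‖ ^ p.toReal := fun j => by
    refine norm_sum_rpow_of_pairwise_disjoint (by linarith) fun i hi k hk hik => ?_
    simp only [coe_filter, Set.mem_ofPred_eq] at hi hk
    rcases lt_or_gt_of_ne hik with h | h
    · exact hf i k (hgap i k (hi.2.trans hk.2.symm) h)
    · exact fun a => (hf k i (hgap k i (hk.2.trans hi.2.symm) h) a).symm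
  calc ‖∑ i ∈ s, f i‖ ^ p.toReal
      = ‖∑ j ∈ range m, ∑ i ∈ s with i % m = j, f i‖ ^ p.toReal := by
        rw [sum_fiberwise_of_maps_to hmaps]
    _ ≤ (∑ j ∈ range m, ‖∑ i ∈ s with i % m = j, f i‖) ^ p.toReal :=
        Real.rpow_le_rpow (norm_nonneg _) (norm_sum_le _ _) (by linarith)
    _ ≤ (m : ℝ) ^ (p.toReal - 1) * ∑ j ∈ range m, ‖∑ i ∈ s with i % m = j, f i‖ ^ p.toReal := by
        simpa using Real.rpow_sum_le_const_mul_sum_rpow_of_nonneg (range m) hp1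
          (fun j _ => norm_nonneg (∑ i ∈ s with i % m = j, f i))
    _ = (m : ℝ) ^ (p.toReal - 1) * ∑ i ∈ s, ‖f i‖ ^ p.toReal := by
        simp only [hclass, sum_fiberwise_of_maps_to hmaps]

end lp

section SummableOfFinsetBound

variable {ι E : Type*} [NormedAddCommGroup E] {f : ι → E} {r C : ℝ}

theorem summable_of_norm_sum_rpow_le [CompleteSpace E] (hr : 0 < r)
    (hf : ∀ s : Finset ι, ‖∑ i ∈ s, f i‖ ^ r ≤ C * ∑ i ∈ s, ‖f i‖ ^ r)
    (hsum : Summable fun i => ‖f i‖ ^ r) : Summable f := by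
  refine summable_iff_vanishing_norm.2 fun ε hε => ?_
  have hδ : 0 < ε ^ r / (|C| + 1) := by positivity
  obtain ⟨s, hs⟩ := summable_iff_vanishing_norm.1 hsum _ hδ
  refine ⟨s, fun t ht => ?_⟩
  have hnonneg : 0 ≤ ∑ i ∈ t, ‖f i‖ ^ r := sum_nonneg fun i _ => by positivity
  have hsmall : ∑ i ∈ t, ‖f i‖ ^ r < ε ^ r / (|C| + 1) := by
    simpa [abs_of_nonneg hnonneg] using hs t ht
  have : ‖∑ i ∈ t, f i‖ ^ r < ε ^ r := calc
    ‖∑ i ∈ t, f i‖ ^ r ≤ C * ∑ i ∈ t, ‖f i‖ ^ r := hf t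
    _ ≤ (|C| + 1) * ∑ i ∈ t, ‖f i‖ ^ r := by gcongr; linarith [le_abs_self C]
    _ < ε ^ r := by rwa [← lt_div_iff₀' (by positivity)]
  exact (Real.rpow_lt_rpow_iff (norm_nonneg _) hε.le hr).1 this

theorem norm_tsum_rpow_le_of_norm_sum_rpow_le (hr : 0 ≤ r) (hC : 0 ≤ C)
    (hf : ∀ s : Finset ι, ‖∑ i ∈ s, f i‖ ^ r ≤ C * ∑ i ∈ s, ‖f i‖ ^ r)
    (hsum : Summable fun i => ‖f i‖ ^ r) (hfs : Summable f) :
    ‖∑' i, f i‖ ^ r ≤ C * ∑' i, ‖f i‖ ^ r := by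
  refine le_of_tendsto (hfs.hasSum.norm.rpow_const (Or.inr hr))
    (Filter.Eventually.of_forall fun s => ?_)
  exact (hf s).trans (mul_le_mul_of_nonneg_left
    (hsum.sum_le_tsum s fun i _ => by positivity) hC)

end SummableOfFinsetBound

section DiagonalChain

variable {w : ℕ → ℕ → ℝ}

theorem weight_eq_one_of_lt (hw0 : ∀ i, w 0 i = 0)
    (hchain : ∀ n, 1 ≤ n → ∀ i, w n i ≠ 0 → w (n + 1) i = 1) {n m i : ℕ}
    (hn : w n i ≠ 0) (hnm : n < m) : w m i = 1 := by
  have h1 : 1 ≤ n := Nat.one_le_iff_ne_zero.2 fun h => hn (h ▸ hw0 i)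
  induction m, hnm using Nat.le_induction with
  | base => exact hchain n h1 i hn
  | succ m hm ih => exact hchain m (by omega) i (by simp [ih])

theorem weight_eq_of_weight_ne_of_add_four_le (hw0 : ∀ i, w 0 i = 0)
    (hchain : ∀ n, 1 ≤ n → ∀ i, w n i ≠ 0 → w (n + 1) i = 1) {n m i : ℕ}
    (hnm : n + 4 ≤ m) (hn : w (n + 1) i ≠ w (n - 2) i) : w (m + 1) i = w (m - 2) i := by
  have hne : w (n + 1) i ≠ 0 := fun h0 => by
    have hne' : w (n - 2) i ≠ 0 := fun h => hn (by rw [h0, h])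
    have := weight_eq_one_of_lt hw0 hchain hne' (show n - 2 < n + 1 by omega)
    simp [h0] at this
  rw [weight_eq_one_of_lt hw0 hchain hne (show n + 1 < m + 1 by omega),
    weight_eq_one_of_lt hw0 hchain hne (show n + 1 < m - 2 by omega)]

end DiagonalChain

theorem stmt1_general (p : ℝ≥0∞) [Fact (1 ≤ p)] (hp' : p ≠ ⊤)
    (A : ℕ → (lp (fun _ : ℕ => ℂ) p →L[ℂ] lp (fun _ : ℕ => ℂ) p))
    (w : ℕ → ℕ → ℝ)
    (hA0 : A 0 = 0)
    (hdiag : ∀ n (x : lp (fun _ : ℕ => ℂ) p) (i : ℕ), (A n x) i = (w n i : ℂ) * x i)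
    (hchain : ∀ n, 1 ≤ n → ∀ i, w n i ≠ 0 → w (n + 1) i = 1)
    (x : ℕ → lp (fun _ : ℕ => ℂ) p)
    (hx0 : x 0 = 0)
    (hxrange : ∀ n, 1 ≤ n → x n ∈ Set.range ⇑(A (n + 1) - A (n - 2)))
    (hxsum : Summable fun n => ‖x n‖ ^ p.toReal) :
    ‖∑' n : ℕ, x n‖ ^ p.toReal ≤ 4 ^ p.toReal * ∑' n : ℕ, ‖x n‖ ^ p.toReal := by
  have hp1 : 1 ≤ p.toReal := by simpa using ENNReal.toReal_mono hp' (Fact.out : 1 ≤ p)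
  have hw0 : ∀ i, w 0 i = 0 := fun i => by
    simpa [hA0] using (hdiag 0 (lp.single p i 1) i).symm
  have hband : ∀ n i, x n i ≠ 0 → w (n + 1) i ≠ w (n - 2) i := by
    intro n i hxi hw
    rcases Nat.eq_zero_or_pos n with rfl | hn
    · exact hxi (by simp [hx0])
    obtain ⟨y, hy⟩ := hxrange n hn
    exact hxi (by simp [← hy, hdiag, hw])
  have hsep : ∀ n m, n + 4 ≤ m → ∀ i, x n i = 0 ∨ x m i = 0 := fun n m hnm i =>
    or_iff_not_imp_left.2 fun hxn => not_not.1 fun hxm =>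
      hband m i hxm (weight_eq_of_weight_ne_of_add_four_le hw0 hchain hnm (hband n i hxn))
  have hfinset := lp.norm_sum_rpow_le_of_separated hp' four_pos hsep
  calc ‖∑' n, x n‖ ^ p.toReal ≤ ((4 : ℕ) : ℝ) ^ (p.toReal - 1) * ∑' n, ‖x n‖ ^ p.toReal :=
        norm_tsum_rpow_le_of_norm_sum_rpow_le (by linarith) (by positivity) hfinset hxsum
          (summable_of_norm_sum_rpow_le (by linarith) hfinset hxsum)
    _ ≤ 4 ^ p.toReal * ∑' n, ‖x n‖ ^ p.toReal := by
        push_cast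
        gcongr
        · norm_num
        · linarith

/-- With `A₁ ≪ A₂ ≪ ...` diagonal operators on ℓᵖ converging to the identity in SOT
(and `A₋₁ = A₀ = 0`), if `∑ ‖xₙ‖ᵖ < ∞` and each `xₙ` lies in the range of `Aₙ₊₁ − Aₙ₋₂`, then
`‖∑ₙ xₙ‖ᵖ ≤ 4ᵖ ∑ₙ ‖xₙ‖ᵖ`. (The sequence is indexed so that `x 0 = 0` and `x n` for `n ≥ 1`
corresponds to the paper's `xₙ`; natural subtraction realises `A₋₁ = A₀ = 0`.) -/
theorem stmt1 (p : ℝ≥0∞) [Fact (1 ≤ p)] (hp : 1 < p) (hp' : p ≠ ⊤)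
    (A : ℕ → (lp (fun _ : ℕ => ℂ) p →L[ℂ] lp (fun _ : ℕ => ℂ) p))
    (w : ℕ → ℕ → ℝ)
    (hA0 : A 0 = 0)
    (hdiag : ∀ n (x : lp (fun _ : ℕ => ℂ) p) (i : ℕ), (A n x) i = (w n i : ℂ) * x i)
    (hfin : ∀ n, (Function.support (w n)).Finite)
    (hrange : ∀ n i, w n i ∈ Set.Icc (0 : ℝ) 1)
    (hchain : ∀ n, 1 ≤ n → ∀ i, w n i ≠ 0 → w (n + 1) i = 1)
    (hSOT : ∀ x : lp (fun _ : ℕ => ℂ) p,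
      Filter.Tendsto (fun n => A n x) Filter.atTop (nhds x))
    (x : ℕ → lp (fun _ : ℕ => ℂ) p)
    (hx0 : x 0 = 0)
    (hxrange : ∀ n, 1 ≤ n → x n ∈ Set.range ⇑(A (n + 1) - A (n - 2)))
    (hxsum : Summable fun n => ‖x n‖ ^ p.toReal) :
    ‖∑' n : ℕ, x n‖ ^ p.toReal ≤ 4 ^ p.toReal * ∑' n : ℕ, ‖x n‖ ^ p.toReal :=
  stmt1_general p hp' A w hA0 hdiag hchain x hx0 hxrange hxsum
end

section
/- Let C ≥ 1. There exists a function f : (0, 1/16) → (0, ∞) with f(t) → 0 as t → 0 such that: for every 0 < ε < 1/16 and every bounded operator E on a complex Banach space Y with E² − E compact, ‖E² − E‖ ≤ ε and ‖E‖ ≤ C, there exists an idempotent Q on Y such that E − Q is compact and ‖E − Q‖ ≤ f(ε). In fact one can take f(ε) = 16(1/2 + C)ε, with Q given by the Riesz projection (1/2πi)∮_{|z−1|=1/2}(zI − E)⁻¹ dz. -/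
/-! The polynomial `p(x) = 3x² − 2x³` fixes `0` and `1` with vanishing derivative there, so it is
a Newton-type map for the equation `x² = x`: writing `d(x) = x² − x`, one has
`d(p x) = d(x)² (4 d(x) − 3)` and `p x − x = −(2x − 1) d(x)`. Starting from `E` with
`‖d(E)‖ ≤ ε < 1/16`, the defects of the iterates decay at least like `ε 4⁻ⁿ` while the steps stay
of size `(4C + 1) ε 4⁻ⁿ`, so the iterates converge to an idempotent `Q` with
`‖E − Q‖ ≤ (4/3)(4C + 1) ε`. Every step is `d(x)` times a polynomial in `x`, so `E − Q` lies in
the closure of the ideal generated by `E² − E` and is therefore compact. -/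

open Filter Topology

section Algebra

variable {R : Type*} [Ring R]

def newtonStep (x : R) : R := 3 * x ^ 2 - 2 * x ^ 3

lemma newtonStep_sub_self (x : R) : newtonStep x - x = -((2 * x - 1) * (x * x - x)) := by
  unfold newtonStep; noncomm_ring

lemma newtonStep_mul_self_sub (x : R) :
    newtonStep x * newtonStep x - newtonStep x = (x * x - x) ^ 2 * (4 * (x * x - x) - 3) := by
  unfold newtonStep; noncomm_ring

lemma TwoSidedIdeal.sub_newtonStep_iterate_mem (I : TwoSidedIdeal R) {x : R}
    (hx : x * x - x ∈ I) (n : ℕ) : x - newtonStep^[n] x ∈ I := by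
  induction n generalizing x with
  | zero => simp [I.zero_mem]
  | succ n ih =>
    have hstep : x - newtonStep x ∈ I := by
      rw [← neg_sub, newtonStep_sub_self, neg_neg]
      exact I.mul_mem_left _ _ hx
    have hdefect : newtonStep x * newtonStep x - newtonStep x ∈ I := by
      rw [newtonStep_mul_self_sub, pow_two, mul_assoc]
      exact I.mul_mem_right _ _ hx
    rw [Function.iterate_succ_apply, ← sub_add_sub_cancel x (newtonStep x)]
    exact I.add_mem hstep (ih hdefect)

lemma TwoSidedIdeal.sub_mem_of_tendsto_newtonStep_iterate [TopologicalSpace R]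
    [ContinuousSub R] (I : TwoSidedIdeal R) (hI : IsClosed (I : Set R)) {x q : R}
    (hx : x * x - x ∈ I) (hq : Tendsto (fun n ↦ newtonStep^[n] x) atTop (𝓝 q)) : x - q ∈ I :=
  hI.mem_of_tendsto (tendsto_const_nhds.sub hq) (.of_forall (I.sub_newtonStep_iterate_mem hx))

end Algebra

section Norm

variable {R : Type*} [NormedRing R]

lemma norm_natCast_le_of_norm_one_le (h1 : ‖(1 : R)‖ ≤ 1) (n : ℕ) : ‖(n : R)‖ ≤ n :=
  (Nat.norm_cast_le n).trans (mul_le_of_le_one_right n.cast_nonneg h1)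

lemma norm_ofNat_mul_le (h1 : ‖(1 : R)‖ ≤ 1) (n : ℕ) [n.AtLeastTwo] (x : R) :
    ‖(OfNat.ofNat n : R) * x‖ ≤ OfNat.ofNat n * ‖x‖ :=
  (norm_mul_le _ _).trans <| mul_le_mul_of_nonneg_right
    (by exact_mod_cast norm_natCast_le_of_norm_one_le h1 n) (norm_nonneg x)

lemma norm_newtonStep_sub_self_le (h1 : ‖(1 : R)‖ ≤ 1) (x : R) :
    ‖newtonStep x - x‖ ≤ (2 * ‖x‖ + 1) * ‖x * x - x‖ := by
  have h2x : ‖2 * x - 1‖ ≤ 2 * ‖x‖ + 1 :=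
    (norm_sub_le _ _).trans (add_le_add (norm_ofNat_mul_le h1 2 x) h1)
  rw [newtonStep_sub_self, norm_neg]
  exact (norm_mul_le _ _).trans (mul_le_mul_of_nonneg_right h2x (norm_nonneg _))

lemma norm_newtonStep_mul_self_sub_le (h1 : ‖(1 : R)‖ ≤ 1) {x : R}
    (hx : ‖x * x - x‖ ≤ 1 / 16) :
    ‖newtonStep x * newtonStep x - newtonStep x‖ ≤ ‖x * x - x‖ / 4 := by
  set δ := ‖x * x - x‖
  have h4 : ‖4 * (x * x - x) - 3‖ ≤ 4 * δ + 3 := by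
    refine (norm_sub_le _ _).trans (add_le_add (norm_ofNat_mul_le h1 4 _) ?_)
    exact_mod_cast norm_natCast_le_of_norm_one_le h1 3
  rw [newtonStep_mul_self_sub]
  calc _ ≤ δ ^ 2 * (4 * δ + 3) := (norm_mul_le _ _).trans <|
        mul_le_mul (norm_pow_le' _ two_pos) h4 (norm_nonneg _) (by positivity)
    _ ≤ δ / 4 := by nlinarith [norm_nonneg (x * x - x)]

lemma norm_newtonStep_sub_self_le_of_near (h1 : ‖(1 : R)‖ ≤ 1) {x y : R} {C : ℝ}
    (hC : 1 / 8 ≤ C) (hx : ‖x‖ ≤ C) (hδ : ‖x * x - x‖ ≤ 1 / 16)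
    (hy : ‖y - x‖ ≤ 4 / 3 * (4 * C + 1) * ‖x * x - x‖) :
    ‖newtonStep y - y‖ ≤ (4 * C + 1) * ‖y * y - y‖ := by
  -- `‖y‖ ≤ C + (4C + 1)/12`, which is at most `2C` exactly when `1/8 ≤ C`
  have hy' : ‖y‖ ≤ 2 * C := by
    have := norm_le_norm_add_norm_sub' y x
    nlinarith [norm_nonneg (x * x - x)]
  exact (norm_newtonStep_sub_self_le h1 y).trans
    (mul_le_mul_of_nonneg_right (by linarith) (norm_nonneg _))

lemma norm_newtonStep_iterate_le (h1 : ‖(1 : R)‖ ≤ 1) {x : R} {C : ℝ}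
    (hC : 1 / 8 ≤ C) (hx : ‖x‖ ≤ C) (hδ : ‖x * x - x‖ ≤ 1 / 16) (n : ℕ) :
    ‖newtonStep^[n] x * newtonStep^[n] x - newtonStep^[n] x‖ ≤ ‖x * x - x‖ * (1 / 4) ^ n ∧
      ‖newtonStep^[n] x - x‖ ≤ 4 / 3 * (4 * C + 1) * ‖x * x - x‖ * (1 - (1 / 4) ^ n) := by
  induction n with
  | zero => simp
  | succ n ih =>
    obtain ⟨hdefect, hdist⟩ := ih
    set y := newtonStep^[n] x
    have hq : (1 / 4 : ℝ) ^ n ≤ 1 := pow_le_one₀ (by norm_num) (by norm_num)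
    have hy : ‖y - x‖ ≤ 4 / 3 * (4 * C + 1) * ‖x * x - x‖ :=
      hdist.trans <| mul_le_of_le_one_right (by positivity) (sub_le_self _ (by positivity))
    have hstep := norm_newtonStep_sub_self_le_of_near h1 hC hx hδ hy
    rw [Function.iterate_succ_apply']
    constructor
    · calc _ ≤ ‖y * y - y‖ / 4 := norm_newtonStep_mul_self_sub_le h1 <|
          hdefect.trans ((mul_le_of_le_one_right (norm_nonneg _) hq).trans hδ)
        _ ≤ _ := by rw [pow_succ]; linarith
    · calc _ ≤ ‖newtonStep y - y‖ + ‖y - x‖ := norm_sub_le_norm_sub_add_norm_sub _ _ _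
        _ ≤ _ := by rw [pow_succ]; nlinarith

lemma dist_newtonStep_iterate_succ_le (h1 : ‖(1 : R)‖ ≤ 1) {x : R} {C : ℝ}
    (hC : 1 / 8 ≤ C) (hx : ‖x‖ ≤ C) (hδ : ‖x * x - x‖ ≤ 1 / 16) (n : ℕ) :
    dist (newtonStep^[n] x) (newtonStep^[n + 1] x) ≤
      (4 * C + 1) * ‖x * x - x‖ * (1 / 4) ^ n := by
  obtain ⟨hdefect, hdist⟩ := norm_newtonStep_iterate_le h1 hC hx hδ n
  have hy : ‖newtonStep^[n] x - x‖ ≤ 4 / 3 * (4 * C + 1) * ‖x * x - x‖ :=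
    hdist.trans <| mul_le_of_le_one_right (by positivity) (sub_le_self _ (by positivity))
  rw [dist_comm, dist_eq_norm, Function.iterate_succ_apply', mul_assoc]
  exact (norm_newtonStep_sub_self_le_of_near h1 hC hx hδ hy).trans
    (mul_le_mul_of_nonneg_left hdefect (by positivity))

theorem exists_idempotent_tendsto_newtonStep_iterate [CompleteSpace R] (h1 : ‖(1 : R)‖ ≤ 1)
    {x : R} {C : ℝ} (hC : 1 / 8 ≤ C) (hx : ‖x‖ ≤ C) (hδ : ‖x * x - x‖ ≤ 1 / 16) :
    ∃ q : R, q * q = q ∧ Tendsto (fun n ↦ newtonStep^[n] x) atTop (𝓝 q) ∧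
      ‖x - q‖ ≤ 4 / 3 * (4 * C + 1) * ‖x * x - x‖ := by
  have hgeom := dist_newtonStep_iterate_succ_le h1 hC hx hδ
  obtain ⟨q, hq⟩ :=
    cauchySeq_tendsto_of_complete (cauchySeq_of_le_geometric _ _ (by norm_num) hgeom)
  refine ⟨q, ?_, hq, ?_⟩
  · have hdefect : Tendsto (fun n ↦ newtonStep^[n] x * newtonStep^[n] x - newtonStep^[n] x)
        atTop (𝓝 0) := by
      refine squeeze_zero_norm (fun n ↦ (norm_newtonStep_iterate_le h1 hC hx hδ n).1) ?_
      simpa using (tendsto_pow_atTop_nhds_zero_of_lt_one (by norm_num : (0 : ℝ) ≤ 1 / 4)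
        (by norm_num)).const_mul ‖x * x - x‖
    exact sub_eq_zero.1 (tendsto_nhds_unique ((hq.mul hq).sub hq) hdefect)
  · have := dist_le_of_le_geometric_of_tendsto₀ _ _ (by norm_num) hgeom hq
    rw [Function.iterate_zero_apply, dist_eq_norm] at this
    exact this.trans_eq (by ring)

end Norm

section CompactOperator

variable (𝕜 Y : Type*) [NontriviallyNormedField 𝕜] [NormedAddCommGroup Y] [NormedSpace 𝕜 Y]

def compactOperatorIdeal : TwoSidedIdeal (Y →L[𝕜] Y) :=
  .mk' {T | IsCompactOperator T} isCompactOperator_zero (·.add ·) (·.neg)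
    (fun hT ↦ hT.clm_comp _) (fun hT ↦ hT.comp_clm _)

variable {𝕜 Y}

lemma mem_compactOperatorIdeal {T : Y →L[𝕜] Y} :
    T ∈ compactOperatorIdeal 𝕜 Y ↔ IsCompactOperator T :=
  TwoSidedIdeal.mem_mk' ..

lemma isClosed_compactOperatorIdeal [CompleteSpace Y] :
    IsClosed (compactOperatorIdeal 𝕜 Y : Set (Y →L[𝕜] Y)) := by
  convert isClosed_setOfPred_isCompactOperator (𝕜₁ := 𝕜) (M₁ := Y) (M₂ := Y) (σ₁₂ := .id 𝕜)
  ext T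
  exact mem_compactOperatorIdeal

end CompactOperator

/-- idempotent perturbation lemma. For `C ≥ 1` there is `f : (0,1/16) → (0,∞)`
with `f(t) → 0` as `t → 0` such that whenever `E` is a bounded operator on a complex Banach
space with `E² − E` compact, `‖E² − E‖ ≤ ε < 1/16` and `‖E‖ ≤ C`, there is an idempotent `Q`
with `E − Q` compact and `‖E − Q‖ ≤ f(ε)`. -/
theorem stmt3 (C : ℝ) (hC : 1 ≤ C) :
    ∃ f : ℝ → ℝ,
      (∀ t ∈ Set.Ioo (0 : ℝ) (1 / 16), 0 < f t) ∧
      Filter.Tendsto f (nhdsWithin 0 (Set.Ioo (0 : ℝ) (1 / 16))) (nhds 0) ∧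
      ∀ (Y : Type) [NormedAddCommGroup Y] [NormedSpace ℂ Y] [CompleteSpace Y]
        (ε : ℝ), 0 < ε → ε < 1 / 16 →
        ∀ E : Y →L[ℂ] Y,
          IsCompactOperator (E ∘L E - E) → ‖E ∘L E - E‖ ≤ ε → ‖E‖ ≤ C →
          ∃ Q : Y →L[ℂ] Y, Q ∘L Q = Q ∧ IsCompactOperator (E - Q) ∧ ‖E - Q‖ ≤ f ε := by
  refine ⟨fun t ↦ (16 * C + 8) * t, fun t ht ↦ by nlinarith [ht.1], ?_, ?_⟩
  · exact ((continuous_const_mul _).tendsto' 0 0 (mul_zero _)).mono_left nhdsWithin_le_nhds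
  intro Y _ _ _ ε _ hε E hcomp hdefect hE
  obtain ⟨Q, hQ, hlim, hEQ⟩ := exists_idempotent_tendsto_newtonStep_iterate
    ContinuousLinearMap.norm_id_le (by linarith : 1 / 8 ≤ C) hE (hdefect.trans hε.le)
  refine ⟨Q, hQ, ?_, ?_⟩
  · exact mem_compactOperatorIdeal.1 <| TwoSidedIdeal.sub_mem_of_tendsto_newtonStep_iterate _
      isClosed_compactOperatorIdeal (mem_compactOperatorIdeal.2 hcomp) hlim
  · calc ‖E - Q‖ ≤ 4 / 3 * (4 * C + 1) * ‖E ∘L E - E‖ := hEQ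
      _ ≤ (16 * C + 8) * ε := by nlinarith [norm_nonneg (E ∘L E - E)]
end

section
/- For every |z − 1| = 1/2 and any bounded operator E on a Banach space Y with ‖E² − E‖ ≤ ε < 1/16 and ‖E‖ ≤ C, the operator zI − E is invertible and ‖(zI − E)⁻¹‖ ≤ 8(1/2 + C). Indeed, for all y ∈ Y, ‖(zI − E)y‖ ≥ ((1/4 − ε)/(1/2 + C))‖y‖. -/
/-- If `‖E² − E‖ ≤ ε < 1/16` and `‖E‖ ≤ C` (with `C ≥ 1`), then for every complex
`z` with `|z − 1| = 1/2`, one has `‖(zI − E)y‖ ≥ ((1/4 − ε)/(1/2 + C))‖y‖` for all `y`, and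
`zI − E` is invertible with `‖(zI − E)⁻¹‖ ≤ 8(1/2 + C)`. -/
theorem stmt4 (Y : Type) [NormedAddCommGroup Y] [NormedSpace ℂ Y] [CompleteSpace Y]
    (C ε : ℝ) (hC : 1 ≤ C) (hε : ε < 1 / 16)
    (E : Y →L[ℂ] Y) (hE1 : ‖E ∘L E - E‖ ≤ ε) (hE2 : ‖E‖ ≤ C)
    (z : ℂ) (hz : ‖z - 1‖ = 1 / 2) :
    (∀ y : Y, ((1 / 4 - ε) / (1 / 2 + C)) * ‖y‖ ≤ ‖z • y - E y‖) ∧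
    ∃ B : Y →L[ℂ] Y,
      (z • (1 : Y →L[ℂ] Y) - E) ∘L B = 1 ∧
      B ∘L (z • (1 : Y →L[ℂ] Y) - E) = 1 ∧
      ‖B‖ ≤ 8 * (1 / 2 + C) := by
  have hε0 : 0 ≤ ε := (norm_nonneg _).trans hE1
  have hzge : (1:ℝ)/2 ≤ ‖z‖ := by
    have h := norm_sub_norm_le (1:ℂ) z
    rw [norm_one, norm_sub_rev, hz] at h
    linarith
  set c : ℂ := z * (z - 1) with hcdef
  have hc : (1:ℝ)/4 ≤ ‖c‖ := by
    rw [hcdef, norm_mul, hz]; linarith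
  have hc0 : c ≠ 0 := by
    intro h; rw [h, norm_zero] at hc; linarith
  set N : Y →L[ℂ] Y := E * E - E with hNdef
  have hE1N : ‖N‖ ≤ ε := hE1
  set A : Y →L[ℂ] Y := z • (1 : Y →L[ℂ] Y) - E with hAdef
  set D : Y →L[ℂ] Y := (z - 1) • (1 : Y →L[ℂ] Y) + E with hDdef
  -- key pointwise lower bound
  have key : ∀ y : Y, ((1/4 - ε)/(1/2 + C)) * ‖y‖ ≤ ‖z • y - E y‖ := by
    intro y
    have hpt : (z - 1) • (z • y - E y) + E (z • y - E y) = c • y - N y := by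
      simp only [hNdef, hcdef, ContinuousLinearMap.sub_apply, ContinuousLinearMap.mul_apply,
        map_sub, map_smul]
      module
    have h2 : ‖N y‖ ≤ ε * ‖y‖ :=
      le_trans (N.le_opNorm y) (mul_le_mul_of_nonneg_right hE1N (norm_nonneg y))
    have hlow : (1/4 - ε) * ‖y‖ ≤ ‖c • y - N y‖ := by
      have h1 : ‖c • y‖ - ‖N y‖ ≤ ‖c • y - N y‖ := norm_sub_norm_le _ _
      rw [norm_smul] at h1
      nlinarith [norm_nonneg y, mul_le_mul_of_nonneg_right hc (norm_nonneg y)]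
    have hup : ‖c • y - N y‖ ≤ (1/2 + C) * ‖z • y - E y‖ := by
      rw [← hpt]
      calc ‖(z - 1) • (z • y - E y) + E (z • y - E y)‖
          ≤ ‖(z - 1) • (z • y - E y)‖ + ‖E (z • y - E y)‖ := norm_add_le _ _
        _ ≤ (1/2) * ‖z • y - E y‖ + C * ‖z • y - E y‖ := by
            rw [norm_smul, hz]
            have h3 := E.le_opNorm (z • y - E y)
            nlinarith [norm_nonneg (z • y - E y)]
        _ = (1/2 + C) * ‖z • y - E y‖ := by ring
    rw [div_mul_eq_mul_div, div_le_iff₀ (by linarith : (0:ℝ) < 1/2 + C)]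
    nlinarith [hlow, hup]
  -- algebraic identities
  have hDA : D * A = c • (1 : Y →L[ℂ] Y) - N := by
    ext y
    simp only [hDdef, hAdef, hNdef, hcdef, ContinuousLinearMap.mul_apply,
      ContinuousLinearMap.add_apply, ContinuousLinearMap.sub_apply,
      ContinuousLinearMap.smul_apply, ContinuousLinearMap.one_apply, map_sub, map_smul]
    module
  have hAD : A * D = c • (1 : Y →L[ℂ] Y) - N := by
    ext y
    simp only [hDdef, hAdef, hNdef, hcdef, ContinuousLinearMap.mul_apply,
      ContinuousLinearMap.add_apply, ContinuousLinearMap.sub_apply,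
      ContinuousLinearMap.smul_apply, ContinuousLinearMap.one_apply, map_sub, map_smul, map_add]
    module
  -- the unit
  have hcpos : (0:ℝ) < ‖c‖ := lt_of_lt_of_le (by norm_num) hc
  have hNnorm : ‖c⁻¹ • N‖ < 1 := by
    have : ‖c⁻¹ • N‖ = ‖c‖⁻¹ * ‖N‖ := by exact norm_smul c⁻¹ N ▸ by rw [norm_inv]
    rw [this, ← div_eq_inv_mul, div_lt_one hcpos]
    linarith
  have hu1 : IsUnit (1 - c⁻¹ • N) := (Units.oneSub _ hNnorm).isUnit
  have hu2 : IsUnit (c • (1 : Y →L[ℂ] Y)) := by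
    rw [← Algebra.algebraMap_eq_smul_one]
    exact (hc0.isUnit).map (algebraMap ℂ (Y →L[ℂ] Y))
  have huA : IsUnit (c • (1 : Y →L[ℂ] Y) - N) := by
    have heq : c • (1 : Y →L[ℂ] Y) - N = (c • (1 : Y →L[ℂ] Y)) * (1 - c⁻¹ • N) := by
      rw [mul_sub, mul_one, smul_mul_assoc, one_mul, smul_smul, mul_inv_cancel₀ hc0, one_smul]
    rw [heq]; exact hu2.mul hu1
  obtain ⟨u, hu⟩ := huA
  have hcommAN : Commute A N := by
    have hEN : Commute E N := ((Commute.refl E).mul_right (Commute.refl E)).sub_right (Commute.refl E)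
    exact (((Commute.one_left N).smul_left z).sub_left hEN)
  have hcommAu : Commute A (↑u : Y →L[ℂ] Y) := by
    rw [hu]
    exact ((Commute.one_right A).smul_right c).sub_right hcommAN
  have hcommAuinv : Commute A (↑u⁻¹ : Y →L[ℂ] Y) := hcommAu.units_inv_right
  set B : Y →L[ℂ] Y := (↑u⁻¹ : Y →L[ℂ] Y) * D with hBdef
  have hBA : B * A = 1 := by
    rw [hBdef, mul_assoc, hDA, ← hu, u.inv_mul]
  have hAB : A * B = 1 := by
    rw [hBdef, ← mul_assoc, hcommAuinv.eq, mul_assoc, hAD, ← hu, u.inv_mul]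
  have hABapp : ∀ x : Y, A (B x) = x := by
    intro x
    have := congrArg (fun f => f x) hAB
    simpa using this
  refine ⟨key, B, hAB, hBA, ?_⟩
  refine ContinuousLinearMap.opNorm_le_bound _ (by positivity) (fun x => ?_)
  have h1 := key (B x)
  have h2 : z • (B x) - E (B x) = x := by
    have h3 : A (B x) = z • (B x) - E (B x) := by
      rw [hAdef]; simp
    rw [← h3, hABapp]
  rw [h2] at h1
  rw [div_mul_eq_mul_div, div_le_iff₀ (by linarith : (0:ℝ) < 1/2 + C)] at h1
  nlinarith [norm_nonneg (B x), norm_nonneg x]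
end

section
/- Let β ≥ 1. There exist ε₀ > 0 and g : (0, ε₀) → (0, ∞) with g(t) → 0 as t → 0 such that: for Banach spaces Y₁, Y₂, operators L : Y₁ → Y₂ and R : Y₂ → Y₁ with RL − I compact, ‖RL − I‖ ≤ ε < ε₀ and ‖L‖, ‖R‖ ≤ β, there exist a Banach space Y₃ and an invertible operator S : Y₂ → Y₁ ⊕ Y₃ with ‖S‖‖S⁻¹‖ ≤ 7β⁶ such that: for all T₁ ∈ B(Y₁), T₂ ∈ B(Y₂) with LT₁ − T₂L and T₁R − RT₂ compact, there are a compact operator K on Y₂ and an operator T₃ on Y₃ with S(T₂ + K)S⁻¹ = T₁ ⊕ T₃, and ‖K‖ ≤ g(ε)(‖T₂‖ + 1) whenever ‖LT₁ − T₂L‖ ≤ ε and ‖T₁R − RT₂‖ ≤ ε. -/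
/-!
Since `‖RL - I‖ < 1`, the operator `RL` is invertible and `M = (RL)⁻¹R` is an exact left inverse
of `L`; it differs from `R` by `((RL)⁻¹ - I)R`, which is compact and of norm `O(ε)`.
Then `y ↦ (My, y - LMy)` identifies `Y₂` with `Y₁ × ker M`, and the operator acting as `T₁` on the
first factor and as the compression of `T₂` on `ker M` is `LT₁M + (I - LM)T₂(I - LM)`. It differs
from `T₂` by `L(T₁M - MT₂) + (I - LM)(LT₁ - T₂L)M`, which is compact and of norm
`O(ε(‖T₂‖ + 1))` because both intertwining defects are.
-/

open ContinuousLinearMap ContinuousLinearEquiv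

section NormedRing

variable {A : Type*} [NormedRing A] {a : A}

theorem ringInverse_sub_one_eq (ha : IsUnit a) :
    Ring.inverse a - 1 = -(Ring.inverse a * (a - 1)) := by
  rw [mul_sub, Ring.inverse_mul_cancel _ ha, mul_one, neg_sub]

variable [HasSummableGeomSeries A]

theorem isUnit_of_norm_sub_one_lt_one (h : ‖a - 1‖ < 1) : IsUnit a := by
  simpa using isUnit_one_sub_of_norm_lt_one (x := 1 - a) (by rwa [norm_sub_rev])

theorem norm_ringInverse_le {ε : ℝ} (h1 : ‖(1 : A)‖ ≤ 1) (ha : ‖a - 1‖ ≤ ε) (hε : ε < 1) :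
    ‖Ring.inverse a‖ ≤ (1 - ε)⁻¹ := by
  have hx : ‖1 - a‖ < 1 := by rw [norm_sub_rev]; linarith
  have := tsum_geometric_le_of_norm_lt_one _ hx
  rw [geom_series_eq_inverse _ hx, sub_sub_cancel, norm_sub_rev] at this
  refine this.trans ?_
  have : (1 - ‖a - 1‖)⁻¹ ≤ (1 - ε)⁻¹ := by gcongr
  linarith

end NormedRing

variable {𝕜 E F : Type*} [NontriviallyNormedField 𝕜] [NormedAddCommGroup E] [NormedSpace 𝕜 E]
  [NormedAddCommGroup F] [NormedSpace 𝕜 F]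

section RightInverse

variable {L : E →L[𝕜] F} {M : F →L[𝕜] E}

noncomputable def compressKer (h : Function.RightInverse L M) (T : F →L[𝕜] F) :
    M.ker →L[𝕜] M.ker :=
  M.projKerOfRightInverse L h ∘L T ∘L M.ker.subtypeL

noncomputable def blockDiag (h : Function.RightInverse L M) (T₁ : E →L[𝕜] E) (T₂ : F →L[𝕜] F) :
    F →L[𝕜] F :=
  ((equivOfRightInverse M L h).symm : E × M.ker →L[𝕜] F) ∘L
    T₁.prodMap (compressKer h T₂) ∘L (equivOfRightInverse M L h : F →L[𝕜] E × M.ker)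

theorem conj_blockDiag (h : Function.RightInverse L M) (T₁ : E →L[𝕜] E) (T₂ : F →L[𝕜] F) :
    (equivOfRightInverse M L h : F →L[𝕜] E × M.ker) ∘L blockDiag h T₁ T₂ ∘L
        ((equivOfRightInverse M L h).symm : E × M.ker →L[𝕜] F) =
      T₁.prodMap (compressKer h T₂) := by
  refine ContinuousLinearMap.ext fun p => ?_
  simp only [blockDiag, comp_apply, ContinuousLinearEquiv.coe_coe, apply_symm_apply]

theorem blockDiag_sub_eq (h : Function.RightInverse L M) (T₁ : E →L[𝕜] E) (T₂ : F →L[𝕜] F) :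
    blockDiag h T₁ T₂ - T₂ = L ∘L (T₁ ∘L M - M ∘L T₂) +
      (ContinuousLinearMap.id 𝕜 F - L ∘L M) ∘L (L ∘L T₁ - T₂ ∘L L) ∘L M := by
  ext y
  simp only [blockDiag, compressKer, sub_apply, add_apply, comp_apply, id_apply,
    ContinuousLinearEquiv.coe_coe, coe_prodMap', Prod.map_fst, Prod.map_snd,
    fst_equivOfRightInverse, snd_equivOfRightInverse, equivOfRightInverse_symm_apply,
    Submodule.coe_subtypeL, Submodule.subtype_apply, coe_projKerOfRightInverse_apply,
    AddSubgroupClass.coe_sub, _root_.map_sub, h _]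
  abel

theorem isCompactOperator_blockDiag_sub (h : Function.RightInverse L M) {T₁ : E →L[𝕜] E}
    {T₂ : F →L[𝕜] F} (hA : IsCompactOperator (L ∘L T₁ - T₂ ∘L L))
    (hB : IsCompactOperator (T₁ ∘L M - M ∘L T₂)) : IsCompactOperator (blockDiag h T₁ T₂ - T₂) := by
  rw [blockDiag_sub_eq]
  exact (hB.clm_comp (σ₂₃ := RingHom.id 𝕜) L).add
    ((hA.comp_clm (σ₁₂ := RingHom.id 𝕜) M).clm_comp (σ₂₃ := RingHom.id 𝕜)
      (ContinuousLinearMap.id 𝕜 F - L ∘L M))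

theorem norm_id_sub_comp_le (L : E →L[𝕜] F) (M : F →L[𝕜] E) :
    ‖ContinuousLinearMap.id 𝕜 F - L ∘L M‖ ≤ 1 + ‖L‖ * ‖M‖ :=
  (norm_sub_le _ _).trans (add_le_add norm_id_le (opNorm_comp_le _ _))

theorem norm_blockDiag_sub_le (h : Function.RightInverse L M) (T₁ : E →L[𝕜] E) (T₂ : F →L[𝕜] F) :
    ‖blockDiag h T₁ T₂ - T₂‖ ≤
      ‖L‖ * ‖T₁ ∘L M - M ∘L T₂‖ + (1 + ‖L‖ * ‖M‖) * ‖L ∘L T₁ - T₂ ∘L L‖ * ‖M‖ := by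
  rw [blockDiag_sub_eq]
  refine (norm_add_le _ _).trans (add_le_add (opNorm_comp_le _ _) ?_)
  calc _ ≤ ‖ContinuousLinearMap.id 𝕜 F - L ∘L M‖ * (‖L ∘L T₁ - T₂ ∘L L‖ * ‖M‖) :=
        (opNorm_comp_le _ _).trans (by gcongr; exact opNorm_comp_le _ _)
    _ ≤ _ := by rw [← mul_assoc]; gcongr; exact norm_id_sub_comp_le L M

theorem norm_le_of_rightInverse (h : Function.RightInverse L M) (T₁ : E →L[𝕜] E) (T₂ : F →L[𝕜] F) :
    ‖T₁‖ ≤ ‖M‖ * (‖L ∘L T₁ - T₂ ∘L L‖ + ‖T₂‖ * ‖L‖) := by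
  have hT₁ : M ∘L ((L ∘L T₁ - T₂ ∘L L) + T₂ ∘L L) = T₁ := by ext x; simp [h _]
  calc ‖T₁‖ = ‖M ∘L ((L ∘L T₁ - T₂ ∘L L) + T₂ ∘L L)‖ := by rw [hT₁]
    _ ≤ ‖M‖ * ‖(L ∘L T₁ - T₂ ∘L L) + T₂ ∘L L‖ := opNorm_comp_le _ _
    _ ≤ _ := by gcongr; exact (norm_add_le _ _).trans (by gcongr; exact opNorm_comp_le _ _)

theorem norm_equivOfRightInverse_le (h : Function.RightInverse L M) :
    ‖(equivOfRightInverse M L h : F →L[𝕜] E × M.ker)‖ ≤ max ‖M‖ (1 + ‖L‖ * ‖M‖) := by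
  refine opNorm_le_bound _ (by positivity) fun y => ?_
  rw [Prod.norm_def, max_mul_of_nonneg _ _ (norm_nonneg y)]
  refine max_le_max (le_opNorm M y) ?_
  rw [ContinuousLinearEquiv.coe_coe, ← Submodule.norm_coe, snd_equivOfRightInverse]
  exact ((ContinuousLinearMap.id 𝕜 F - L ∘L M).le_opNorm y).trans
    (by gcongr; exact norm_id_sub_comp_le L M)

theorem norm_equivOfRightInverse_symm_le (h : Function.RightInverse L M) :
    ‖((equivOfRightInverse M L h).symm : E × M.ker →L[𝕜] F)‖ ≤ ‖L‖ + 1 := by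
  refine opNorm_le_bound _ (by positivity) fun p => ?_
  rw [ContinuousLinearEquiv.coe_coe, equivOfRightInverse_symm_apply, add_mul, one_mul]
  refine (norm_add_le _ _).trans (add_le_add ?_ ?_)
  · exact (L.le_opNorm _).trans (by gcongr; exact norm_fst_le p)
  · rw [Submodule.norm_coe]; exact norm_snd_le p

theorem norm_equivOfRightInverse_mul_norm_symm_le (h : Function.RightInverse L M) {β : ℝ}
    (hβ : 1 ≤ β) (hL : ‖L‖ ≤ β) (hM : ‖M‖ ≤ 2 * β) :
    ‖(equivOfRightInverse M L h : F →L[𝕜] E × M.ker)‖ *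
      ‖((equivOfRightInverse M L h).symm : E × M.ker →L[𝕜] F)‖ ≤ 7 * β ^ 6 := by
  have hS : ‖(equivOfRightInverse M L h : F →L[𝕜] E × M.ker)‖ ≤ 1 + β * (2 * β) := by
    refine (norm_equivOfRightInverse_le h).trans (max_le ?_ ?_)
    · nlinarith
    · gcongr
  have hSsymm := (norm_equivOfRightInverse_symm_le h).trans (add_le_add_left hL 1)
  calc _ ≤ (1 + β * (2 * β)) * (β + 1) := by gcongr
    _ ≤ 7 * β ^ 6 := by
        nlinarith [one_le_pow₀ (n := 3) hβ, le_self_pow₀ hβ (show 3 ≠ 0 by norm_num),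
          pow_le_pow_right₀ hβ (show 2 ≤ 3 by norm_num),
          pow_le_pow_right₀ hβ (show 3 ≤ 6 by norm_num)]

end RightInverse

theorem rightInverse_ringInverse_comp {L : E →L[𝕜] F} {R : F →L[𝕜] E} (hu : IsUnit (R ∘L L)) :
    Function.RightInverse L (Ring.inverse (R ∘L L) ∘L R) := fun x =>
  congr($(Ring.inverse_mul_cancel _ hu) x)

theorem isCompactOperator_ringInverse_sub_id {a : E →L[𝕜] E} (ha : IsUnit a)
    (hc : IsCompactOperator (a - ContinuousLinearMap.id 𝕜 E)) :
    IsCompactOperator (Ring.inverse a - ContinuousLinearMap.id 𝕜 E) := by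
  rw [← one_def, ringInverse_sub_one_eq ha]
  exact (hc.clm_comp (σ₂₃ := RingHom.id 𝕜) (Ring.inverse a)).neg

theorem comp_sub_comp_comp_eq (T₁ N : E →L[𝕜] E) (R : F →L[𝕜] E) (T₂ : F →L[𝕜] F) :
    T₁ ∘L (N ∘L R) - (N ∘L R) ∘L T₂ =
      (T₁ ∘L (N - ContinuousLinearMap.id 𝕜 E) - (N - ContinuousLinearMap.id 𝕜 E) ∘L T₁) ∘L R +
        N ∘L (T₁ ∘L R - R ∘L T₂) := by
  ext x
  simp only [sub_apply, comp_apply, add_apply, id_apply, _root_.map_sub]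
  abel

theorem isCompactOperator_comp_sub_comp_comp {T₁ N : E →L[𝕜] E} {R : F →L[𝕜] E} {T₂ : F →L[𝕜] F}
    (hN : IsCompactOperator (N - ContinuousLinearMap.id 𝕜 E))
    (hB : IsCompactOperator (T₁ ∘L R - R ∘L T₂)) :
    IsCompactOperator (T₁ ∘L (N ∘L R) - (N ∘L R) ∘L T₂) := by
  rw [comp_sub_comp_comp_eq]
  exact (((hN.clm_comp (σ₂₃ := RingHom.id 𝕜) T₁).sub
    (hN.comp_clm (σ₁₂ := RingHom.id 𝕜) T₁)).comp_clm (σ₁₂ := RingHom.id 𝕜) R).add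
    (hB.clm_comp (σ₂₃ := RingHom.id 𝕜) N)

theorem norm_comp_sub_comp_comp_le (T₁ N : E →L[𝕜] E) (R : F →L[𝕜] E) (T₂ : F →L[𝕜] F) :
    ‖T₁ ∘L (N ∘L R) - (N ∘L R) ∘L T₂‖ ≤
      2 * ‖T₁‖ * ‖N - ContinuousLinearMap.id 𝕜 E‖ * ‖R‖ + ‖N‖ * ‖T₁ ∘L R - R ∘L T₂‖ := by
  rw [comp_sub_comp_comp_eq]
  refine (norm_add_le _ _).trans (add_le_add ?_ (opNorm_comp_le _ _))
  refine (opNorm_comp_le _ _).trans (mul_le_mul_of_nonneg_right ?_ (norm_nonneg R))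
  calc _ ≤ ‖T₁‖ * ‖N - ContinuousLinearMap.id 𝕜 E‖ + ‖N - ContinuousLinearMap.id 𝕜 E‖ * ‖T₁‖ :=
        (norm_sub_le _ _).trans (add_le_add (opNorm_comp_le _ _) (opNorm_comp_le _ _))
    _ = 2 * ‖T₁‖ * ‖N - ContinuousLinearMap.id 𝕜 E‖ := by ring

section Approximate

variable [CompleteSpace E] {L : E →L[𝕜] F} {R : F →L[𝕜] E} {β ε : ℝ}

theorem norm_ringInverse_comp_le_two (hRL : ‖R ∘L L - ContinuousLinearMap.id 𝕜 E‖ ≤ ε)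
    (hε : ε ≤ 1 / 2) : ‖Ring.inverse (R ∘L L)‖ ≤ 2 := by
  refine (norm_ringInverse_le norm_id_le hRL (by linarith)).trans ?_
  rw [inv_le_comm₀ (by linarith) two_pos]
  linarith

theorem norm_ringInverse_comp_comp_le (hR : ‖R‖ ≤ β)
    (hRL : ‖R ∘L L - ContinuousLinearMap.id 𝕜 E‖ ≤ ε) (hε : ε ≤ 1 / 2) :
    ‖Ring.inverse (R ∘L L) ∘L R‖ ≤ 2 * β :=
  (opNorm_comp_le _ _).trans
    (mul_le_mul (norm_ringInverse_comp_le_two hRL hε) hR (norm_nonneg R) zero_le_two)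

theorem norm_blockDiag_sub_le_of_approx (hβ : 1 ≤ β) (hL : ‖L‖ ≤ β) (hR : ‖R‖ ≤ β)
    (hRL : ‖R ∘L L - ContinuousLinearMap.id 𝕜 E‖ ≤ ε) (hε : ε ≤ 1 / 2)
    (h : Function.RightInverse L (Ring.inverse (R ∘L L) ∘L R)) {T₁ : E →L[𝕜] E} {T₂ : F →L[𝕜] F}
    (hA : ‖L ∘L T₁ - T₂ ∘L L‖ ≤ ε) (hB : ‖T₁ ∘L R - R ∘L T₂‖ ≤ ε) :
    ‖blockDiag h T₁ T₂ - T₂‖ ≤ 16 * β ^ 4 * ε * (‖T₂‖ + 1) := by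
  set N := Ring.inverse (R ∘L L)
  have hN : ‖N‖ ≤ 2 := norm_ringInverse_comp_le_two hRL hε
  have hM : ‖N ∘L R‖ ≤ 2 * β := norm_ringInverse_comp_comp_le hR hRL hε
  have hD : ‖N - ContinuousLinearMap.id 𝕜 E‖ ≤ 2 * ε := by
    have hu : IsUnit (R ∘L L) := isUnit_of_norm_sub_one_lt_one (hRL.trans_lt (by linarith))
    rw [← one_def, ringInverse_sub_one_eq hu, norm_neg]
    exact (norm_mul_le _ _).trans (mul_le_mul hN hRL (norm_nonneg _) zero_le_two)
  have hT₁ : ‖T₁‖ ≤ 2 * β * (ε + ‖T₂‖ * β) :=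
    (norm_le_of_rightInverse h T₁ T₂).trans (by gcongr)
  have hC := norm_comp_sub_comp_comp_le T₁ N R T₂
  have hε₀ : 0 ≤ ε := (norm_nonneg _).trans hA
  calc _ ≤ ‖L‖ * ‖T₁ ∘L (N ∘L R) - (N ∘L R) ∘L T₂‖ +
        (1 + ‖L‖ * ‖N ∘L R‖) * ‖L ∘L T₁ - T₂ ∘L L‖ * ‖N ∘L R‖ := norm_blockDiag_sub_le h T₁ T₂
    _ ≤ β * (2 * (2 * β * (ε + ‖T₂‖ * β)) * (2 * ε) * β + 2 * ε) +
        (1 + β * (2 * β)) * ε * (2 * β) := by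
        gcongr
        exact hC.trans (by gcongr)
    _ ≤ 16 * β ^ 4 * ε * (‖T₂‖ + 1) := by
        have hβ₁ : β ≤ β ^ 4 := le_self_pow₀ hβ (by norm_num)
        have hβ₃ : β ^ 3 ≤ β ^ 4 := pow_le_pow_right₀ hβ (by norm_num)
        have hβ₄ε : 0 ≤ β ^ 4 * ε := by positivity
        nlinarith [mul_le_mul_of_nonneg_right hβ₁ hε₀, mul_le_mul_of_nonneg_right hβ₃ hε₀,
          mul_le_mul_of_nonneg_right hβ₃ (mul_nonneg hε₀ hε₀), mul_nonneg hβ₄ε (norm_nonneg T₂),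
          mul_nonneg hβ₄ε (sub_nonneg.2 hε)]

end Approximate

/-- approximate complementation lemma. For `β ≥ 1` there exist `ε₀ > 0` and
`g : (0,ε₀) → (0,∞)` with `g(t) → 0` as `t → 0` such that: for Banach spaces `Y₁, Y₂` and
operators `L : Y₁ → Y₂`, `R : Y₂ → Y₁` with `RL − I` compact, `‖RL − I‖ ≤ ε < ε₀`,
`‖L‖, ‖R‖ ≤ β`, there are a (sub)space `Y₃` of `Y₂` and an invertible `S : Y₂ → Y₁ ⊕ Y₃` with
`‖S‖‖S⁻¹‖ ≤ 7β⁶` such that: whenever `LT₁ − T₂L` and `T₁R − RT₂` are compact, there are a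
compact `K` and an operator `T₃` on `Y₃` with `S(T₂ + K)S⁻¹ = T₁ ⊕ T₃`, and
`‖K‖ ≤ g(ε)(‖T₂‖ + 1)` whenever `‖LT₁ − T₂L‖ ≤ ε` and `‖T₁R − RT₂‖ ≤ ε`. -/
theorem stmt5 (β : ℝ) (hβ : 1 ≤ β) :
    ∃ ε₀ : ℝ, 0 < ε₀ ∧ ∃ g : ℝ → ℝ,
      (∀ t ∈ Set.Ioo (0 : ℝ) ε₀, 0 < g t) ∧
      Filter.Tendsto g (nhdsWithin 0 (Set.Ioo (0 : ℝ) ε₀)) (nhds 0) ∧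
      ∀ (Y₁ Y₂ : Type) [NormedAddCommGroup Y₁] [NormedSpace ℂ Y₁] [CompleteSpace Y₁]
        [NormedAddCommGroup Y₂] [NormedSpace ℂ Y₂] [CompleteSpace Y₂]
        (ε : ℝ) (L : Y₁ →L[ℂ] Y₂) (R : Y₂ →L[ℂ] Y₁),
        0 < ε → ε < ε₀ →
        IsCompactOperator (R ∘L L - ContinuousLinearMap.id ℂ Y₁) → ‖R ∘L L - ContinuousLinearMap.id ℂ Y₁‖ ≤ ε → ‖L‖ ≤ β → ‖R‖ ≤ β →
        ∃ (Y₃ : Submodule ℂ Y₂) (S : Y₂ ≃L[ℂ] Y₁ × Y₃),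
          ‖(S : Y₂ →L[ℂ] Y₁ × Y₃)‖ * ‖(S.symm : Y₁ × Y₃ →L[ℂ] Y₂)‖ ≤ 7 * β ^ 6 ∧
          ∀ (T₁ : Y₁ →L[ℂ] Y₁) (T₂ : Y₂ →L[ℂ] Y₂),
            IsCompactOperator (L ∘L T₁ - T₂ ∘L L) →
            IsCompactOperator (T₁ ∘L R - R ∘L T₂) →
            ∃ (K : Y₂ →L[ℂ] Y₂) (T₃ : Y₃ →L[ℂ] Y₃),
              IsCompactOperator K ∧
              (S : Y₂ →L[ℂ] Y₁ × Y₃) ∘L (T₂ + K) ∘L (S.symm : Y₁ × Y₃ →L[ℂ] Y₂) =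
                T₁.prodMap T₃ ∧
              (‖L ∘L T₁ - T₂ ∘L L‖ ≤ ε → ‖T₁ ∘L R - R ∘L T₂‖ ≤ ε →
                ‖K‖ ≤ g ε * (‖T₂‖ + 1)) := by
  refine ⟨1 / 2, by norm_num, fun t => 16 * β ^ 4 * t, fun t ht => by have := ht.1; positivity,
    ?_, ?_⟩
  · exact ((continuous_const.mul continuous_id).tendsto' 0 0 (by simp)).mono_left
      nhdsWithin_le_nhds
  intro Y₁ Y₂ _ _ _ _ _ _ ε L R _ hεε₀ hRLc hRL hL hR
  have hu : IsUnit (R ∘L L) := isUnit_of_norm_sub_one_lt_one (hRL.trans_lt (by linarith))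
  have h := rightInverse_ringInverse_comp hu
  refine ⟨_, equivOfRightInverse _ L h, norm_equivOfRightInverse_mul_norm_symm_le h hβ hL
    (norm_ringInverse_comp_comp_le hR hRL hεε₀.le),
    fun T₁ T₂ hAc hBc => ⟨blockDiag h T₁ T₂ - T₂, compressKer h T₂, ?_, ?_, ?_⟩⟩
  · exact isCompactOperator_blockDiag_sub h hAc
      (isCompactOperator_comp_sub_comp_comp (isCompactOperator_ringInverse_sub_id hu hRLc) hBc)
  · rw [add_sub_cancel]
    exact conj_blockDiag h T₁ T₂
  · exact norm_blockDiag_sub_le_of_approx hβ hL hR hRL hεε₀.le h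
end

section
/- Let T be a diagonal operator on ℓ²({1,...,n}) with distinct diagonal entries u₁,...,uₙ, let D be a diagonal operator on ℓᵖ (1 < p < ∞), let β ≥ 1, and let L : ℓ²({1,...,n}) → ℓᵖ satisfy (1/β)‖x‖ ≤ ‖Lx‖ ≤ β‖x‖ for all x. Let ε = minᵢ≠ⱼ|uᵢ − uⱼ|. Then (1/β)√n ≤ (2/ε)‖DL − LT‖·n + β·n^{1/p} and (1/β)n^{1/p} ≤ (4/ε)‖DL − LT‖·n + β·√n. -/
/-!
Write `fᵢ = L eᵢ`. The coordinates of `(DL - LT) eᵢ` are `(vⱼ - uᵢ) fᵢ(j)`, so off the set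
`Jᵢ = {j : |vⱼ - uᵢ| < ε/2}` the vector `fᵢ` has norm at most `(2/ε)‖DL - LT‖`: up to that error,
`fᵢ` is supported on `Jᵢ`. The `Jᵢ` are pairwise disjoint, and in `ℓᵖ` the norm of a sum of `n`
disjointly supported vectors of norm between `1/β` and `β` lies between `n^{1/p}/β` and
`n^{1/p} β`, whereas `‖∑ fᵢ‖ = ‖L (∑ eᵢ)‖` lies between `√n/β` and `β √n`.
-/

open scoped ENNReal
open Function

namespace lp

variable {ι E : Type*} [NormedAddCommGroup E] {q : ℝ≥0∞}

lemma norm_le_mul_of_forall_norm_le (hq : q ≠ 0) {x y : lp (fun _ : ι => E) q} {c : ℝ}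
    (hc : 0 ≤ c) (h : ∀ i, ‖x i‖ ≤ c * ‖y i‖) : ‖x‖ ≤ c * ‖y‖ :=
  calc ‖x‖ ≤ ‖c • toNorm y‖ := norm_mono hq fun i => by simpa [abs_of_nonneg hc] using h i
    _ = c * ‖y‖ := by rw [norm_const_smul hq, norm_toNorm, Real.norm_of_nonneg hc]

noncomputable def indicator (s : Set ι) (f : lp (fun _ : ι => E) q) : lp (fun _ : ι => E) q :=
  ⟨s.indicator f, (lp.memℓp f).mono' fun _ => norm_indicator_le_norm_self _ _⟩

@[simp]
lemma coe_indicator (s : Set ι) (f : lp (fun _ : ι => E) q) : ⇑(indicator s f) = s.indicator f :=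
  rfl

lemma sub_indicator_apply (s : Set ι) (f : lp (fun _ : ι => E) q) (i : ι) :
    (f - indicator s f) i = sᶜ.indicator f i := by
  rw [coeFn_sub, Pi.sub_apply]
  by_cases h : i ∈ s <;> simp [h]

lemma norm_indicator_le (hq : q ≠ 0) (s : Set ι) (f : lp (fun _ : ι => E) q) :
    ‖indicator s f‖ ≤ ‖f‖ :=
  norm_mono hq fun _ => norm_indicator_le_norm_self _ _

lemma norm_sub_indicator_preimage_ball_le {𝕜 : Type*} [NormedField 𝕜] [NormedSpace 𝕜 E]
    (hq : q ≠ 0) {v : ι → 𝕜} {c : 𝕜} {r : ℝ} (hr : 0 < r) {g w : lp (fun _ : ι => E) q}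
    (hw : ∀ i, w i = (v i - c) • g i) :
    ‖g - indicator (v ⁻¹' Metric.ball c r) g‖ ≤ r⁻¹ * ‖w‖ := by
  refine norm_le_mul_of_forall_norm_le hq (inv_nonneg.mpr hr.le) fun i => ?_
  rw [sub_indicator_apply]
  by_cases hi : v i ∈ Metric.ball c r
  · have hw₀ : 0 ≤ r⁻¹ * ‖w i‖ := by positivity
    simpa [hi] using hw₀
  · have hr' : r ≤ ‖v i - c‖ := by simpa [dist_eq_norm] using hi
    calc ‖(v ⁻¹' Metric.ball c r)ᶜ.indicator g i‖ = r⁻¹ * (r * ‖g i‖) := by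
          simp [hi, hr.ne']
      _ ≤ r⁻¹ * ‖w i‖ := by rw [hw, norm_smul]; gcongr

lemma pairwise_disjoint_support_indicator
    {κ : Type*} {s : κ → Set ι} {f : κ → lp (fun _ : ι => E) q}
    (hs : Pairwise (Disjoint on s)) :
    Pairwise (Disjoint on fun k => support (indicator (s k) (f k))) :=
  fun _ _ h => (hs h).mono Set.support_indicator_subset Set.support_indicator_subset

lemma norm_sum_rpow_of_pairwise_disjoint_s7 (hq : 0 < q.toReal) {κ : Type*} (s : Finset κ)
    (f : κ → lp (fun _ : ι => E) q)
    (hf : Pairwise (Disjoint on fun k => support (f k))) :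
    ‖∑ k ∈ s, f k‖ ^ q.toReal = ∑ k ∈ s, ‖f k‖ ^ q.toReal := by
  have hpt (i : ι) : ‖∑ k ∈ s, f k i‖ ^ q.toReal = ∑ k ∈ s, ‖f k i‖ ^ q.toReal := by
    by_cases h : ∃ k ∈ s, f k i ≠ 0
    · obtain ⟨k, hk, hki⟩ := h
      have hzero : ∀ k' ≠ k, f k' i = 0 := fun k' hk' => by
        by_contra h'
        exact Set.disjoint_left.mp (hf hk') h' hki
      rw [Finset.sum_eq_single_of_mem k hk fun k' _ hk' => hzero k' hk',
        Finset.sum_eq_single_of_mem k hk fun k' _ hk' => by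
          simp [hzero k' hk', Real.zero_rpow hq.ne']]
    · push Not at h
      rw [Finset.sum_eq_zero h,
        Finset.sum_eq_zero fun k hk => by simp [h k hk, Real.zero_rpow hq.ne']]
      simp [Real.zero_rpow hq.ne']
  simp only [norm_rpow_eq_tsum hq, coeFn_sum, Finset.sum_apply, hpt]
  exact Summable.tsum_finsetSum fun k _ => (lp.memℓp (f k)).summable hq

variable {κ : Type*} [Fintype κ] {f : κ → lp (fun _ : ι => E) q}

lemma norm_sum_le_of_pairwise_disjoint (hq : 0 < q.toReal)
    (hf : Pairwise (Disjoint on fun k => support (f k)))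
    {b : ℝ} (hb : ∀ k, ‖f k‖ ≤ b) :
    ‖∑ k, f k‖ ≤ (Fintype.card κ : ℝ) ^ q.toReal⁻¹ * b := by
  rcases isEmpty_or_nonempty κ with hκ | ⟨⟨k₀⟩⟩
  · simp [Real.zero_rpow (inv_ne_zero hq.ne')]
  have hb₀ : 0 ≤ b := (lp.norm_nonneg' _).trans (hb k₀)
  rw [← Real.rpow_le_rpow_iff (lp.norm_nonneg' _) (by positivity) hq,
    norm_sum_rpow_of_pairwise_disjoint_s7 hq _ _ hf, Real.mul_rpow (by positivity) hb₀,
    Real.rpow_inv_rpow (by positivity) hq.ne']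
  calc ∑ k, ‖f k‖ ^ q.toReal ≤ ∑ _k : κ, b ^ q.toReal :=
        Finset.sum_le_sum fun k _ => Real.rpow_le_rpow (lp.norm_nonneg' _) (hb k) hq.le
    _ = _ := by simp

lemma le_norm_sum_of_pairwise_disjoint (hq : 0 < q.toReal)
    (hf : Pairwise (Disjoint on fun k => support (f k)))
    {a : ℝ} (ha : ∀ k, a ≤ ‖f k‖) :
    (Fintype.card κ : ℝ) ^ q.toReal⁻¹ * a ≤ ‖∑ k, f k‖ := by
  rcases lt_or_ge a 0 with ha₀ | ha₀
  · exact (mul_nonpos_of_nonneg_of_nonpos (by positivity) ha₀.le).trans (lp.norm_nonneg' _)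
  rw [← Real.rpow_le_rpow_iff (by positivity) (lp.norm_nonneg' _) hq,
    norm_sum_rpow_of_pairwise_disjoint_s7 hq _ _ hf, Real.mul_rpow (by positivity) ha₀,
    Real.rpow_inv_rpow (by positivity) hq.ne']
  calc _ = ∑ _k : κ, a ^ q.toReal := by simp
    _ ≤ ∑ k, ‖f k‖ ^ q.toReal :=
        Finset.sum_le_sum fun k _ => Real.rpow_le_rpow ha₀ (ha k) hq.le

variable [Fact (1 ≤ q)] {s : κ → Set ι} {η : ℝ}

lemma norm_sum_sub_indicator_le (hη : ∀ k, ‖f k - indicator (s k) (f k)‖ ≤ η) :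
    ‖∑ k, (f k - indicator (s k) (f k))‖ ≤ Fintype.card κ * η :=
  (norm_sum_le_of_le _ fun k _ => hη k).trans_eq (by simp)

lemma norm_sum_le_of_norm_sub_indicator_le (hq : 0 < q.toReal) (hs : Pairwise (Disjoint on s))
    {b : ℝ} (hb : ∀ k, ‖f k‖ ≤ b) (hη : ∀ k, ‖f k - indicator (s k) (f k)‖ ≤ η) :
    ‖∑ k, f k‖ ≤ (Fintype.card κ : ℝ) ^ q.toReal⁻¹ * b + Fintype.card κ * η :=
  calc ‖∑ k, f k‖
      = ‖∑ k, indicator (s k) (f k) + ∑ k, (f k - indicator (s k) (f k))‖ := by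
        simp
    _ ≤ ‖∑ k, indicator (s k) (f k)‖ + ‖∑ k, (f k - indicator (s k) (f k))‖ := norm_add_le _ _
    _ ≤ _ := add_le_add
        (norm_sum_le_of_pairwise_disjoint hq (pairwise_disjoint_support_indicator hs)
          fun k => (norm_indicator_le (ENNReal.toReal_pos_iff.mp hq).1.ne' _ _).trans (hb k))
        (norm_sum_sub_indicator_le hη)

lemma le_norm_sum_of_norm_sub_indicator_le (hq : 0 < q.toReal) (hs : Pairwise (Disjoint on s))
    {a : ℝ} (ha : ∀ k, a ≤ ‖f k‖) (hη : ∀ k, ‖f k - indicator (s k) (f k)‖ ≤ η) :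
    (Fintype.card κ : ℝ) ^ q.toReal⁻¹ * (a - η) ≤ ‖∑ k, f k‖ + Fintype.card κ * η :=
  calc (Fintype.card κ : ℝ) ^ q.toReal⁻¹ * (a - η)
      ≤ ‖∑ k, indicator (s k) (f k)‖ :=
        le_norm_sum_of_pairwise_disjoint hq (pairwise_disjoint_support_indicator hs) fun k => by
          linarith [ha k, hη k, norm_le_norm_add_norm_sub' (f k) (indicator (s k) (f k))]
    _ = ‖∑ k, f k - ∑ k, (f k - indicator (s k) (f k))‖ := by simp
    _ ≤ ‖∑ k, f k‖ + ‖∑ k, (f k - indicator (s k) (f k))‖ := norm_sub_le _ _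
    _ ≤ _ := by grw [norm_sum_sub_indicator_le hη]

end lp

lemma Real.natCast_rpow_le_self (n : ℕ) {r : ℝ} (hr₀ : 0 < r) (hr₁ : r ≤ 1) : (n : ℝ) ^ r ≤ n := by
  rcases n.eq_zero_or_pos with rfl | hn
  · simp [Real.zero_rpow hr₀.ne']
  · exact Real.rpow_le_self_of_one_le (by exact_mod_cast hn) hr₁

namespace EuclideanSpace

variable {𝕜 ι : Type*} [RCLike 𝕜] [DecidableEq ι]

lemma norm_sum_single_one [Fintype ι] :
    ‖∑ i : ι, EuclideanSpace.single i (1 : 𝕜)‖ = √(Fintype.card ι) := by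
  simp [EuclideanSpace.norm_eq]

lemma apply_single_of_diagonal {T : EuclideanSpace 𝕜 ι → EuclideanSpace 𝕜 ι} {u : ι → 𝕜}
    (hT : ∀ x i, T x i = u i * x i) (i : ι) :
    T (EuclideanSpace.single i 1) = u i • EuclideanSpace.single i 1 := by
  ext j
  by_cases h : j = i <;> simp [hT, h]

end EuclideanSpace

lemma sub_comp_apply_single_of_diagonal {𝕜 ι κ : Type*} [RCLike 𝕜] [DecidableEq κ] {q : ℝ≥0∞}
    [Fact (1 ≤ q)] {T : EuclideanSpace 𝕜 κ →L[𝕜] EuclideanSpace 𝕜 κ}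
    {D : lp (fun _ : ι => 𝕜) q →L[𝕜] lp (fun _ : ι => 𝕜) q}
    {L : EuclideanSpace 𝕜 κ →L[𝕜] lp (fun _ : ι => 𝕜) q} {u : κ → 𝕜} {v : ι → 𝕜}
    (hT : ∀ x k, T x k = u k * x k) (hD : ∀ x i, D x i = v i * x i) (k : κ) (i : ι) :
    (D ∘L L - L ∘L T) (EuclideanSpace.single k 1) i
      = (v i - u k) • L (EuclideanSpace.single k 1) i := by
  simp only [sub_apply, ContinuousLinearMap.comp_apply, EuclideanSpace.apply_single_of_diagonal hT,
    map_smul, lp.coeFn_sub, Pi.sub_apply, lp.coeFn_smul, Pi.smul_apply, hD, smul_eq_mul]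
  ring

theorem stmt7_general (p : ℝ) (hp : 1 < p) [Fact (1 ≤ ENNReal.ofReal p)]
    (n : ℕ)
    (u : Fin n → ℂ)
    (T : EuclideanSpace ℂ (Fin n) →L[ℂ] EuclideanSpace ℂ (Fin n))
    (hT : ∀ (x : EuclideanSpace ℂ (Fin n)) (i : Fin n), T x i = u i * x i)
    (v : ℕ → ℂ)
    (D : lp (fun _ : ℕ => ℂ) (ENNReal.ofReal p) →L[ℂ] lp (fun _ : ℕ => ℂ) (ENNReal.ofReal p))
    (hD : ∀ (x : lp (fun _ : ℕ => ℂ) (ENNReal.ofReal p)) (i : ℕ), D x i = v i * x i)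
    (β : ℝ)
    (L : EuclideanSpace ℂ (Fin n) →L[ℂ] lp (fun _ : ℕ => ℂ) (ENNReal.ofReal p))
    (hL : ∀ x, (1 / β) * ‖x‖ ≤ ‖L x‖ ∧ ‖L x‖ ≤ β * ‖x‖)
    (ε : ℝ) (hε : 0 < ε)
    (hsep : ∀ i j, i ≠ j → ε ≤ ‖u i - u j‖) :
    (1 / β) * Real.sqrt n ≤ (2 / ε) * ‖D ∘L L - L ∘L T‖ * n + β * (n : ℝ) ^ (1 / p) ∧
    (1 / β) * (n : ℝ) ^ (1 / p) ≤ (4 / ε) * ‖D ∘L L - L ∘L T‖ * n + β * Real.sqrt n := by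
  set δ := ‖D ∘L L - L ∘L T‖
  have hq : (ENNReal.ofReal p).toReal = p := ENNReal.toReal_ofReal (by linarith)
  let e : Fin n → EuclideanSpace ℂ (Fin n) := fun i => EuclideanSpace.single i 1
  let J : Fin n → Set ℕ := fun i => v ⁻¹' Metric.ball (u i) (ε / 2)
  have hJ : Pairwise (Disjoint on J) := fun i i' h =>
    (Metric.ball_disjoint_ball (by rw [dist_eq_norm]; linarith [hsep i i' h])).preimage v
  have hLe (i : Fin n) : 1 / β ≤ ‖L (e i)‖ ∧ ‖L (e i)‖ ≤ β := by simpa [e] using hL (e i)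
  have hη (i : Fin n) : ‖L (e i) - lp.indicator (J i) (L (e i))‖ ≤ 2 / ε * δ :=
    calc _ ≤ (ε / 2)⁻¹ * ‖(D ∘L L - L ∘L T) (e i)‖ :=
          lp.norm_sub_indicator_preimage_ball_le (ENNReal.ofReal_pos.2 (by linarith)).ne'
            (by positivity) (sub_comp_apply_single_of_diagonal hT hD i)
      _ ≤ 2 / ε * δ := by
          rw [inv_div]
          gcongr
          simpa [e] using (D ∘L L - L ∘L T).le_opNorm (e i)
  obtain ⟨hLX₁, hLX₂⟩ : 1 / β * √n ≤ ‖∑ i, L (e i)‖ ∧ ‖∑ i, L (e i)‖ ≤ β * √n := by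
    have hX : ‖∑ i, e i‖ = √n := by
      simpa using EuclideanSpace.norm_sum_single_one (𝕜 := ℂ) (ι := Fin n)
    rw [← map_sum, ← hX]
    exact hL _
  have hupper := lp.norm_sum_le_of_norm_sub_indicator_le (by linarith) hJ (fun i => (hLe i).2) hη
  have hlower := lp.le_norm_sum_of_norm_sub_indicator_le (by linarith) hJ (fun i => (hLe i).1) hη
  have hn : (n : ℝ) ^ (1 / p) ≤ n :=
    Real.natCast_rpow_le_self n (by positivity) ((div_le_one (by linarith)).2 hp.le)
  have hδ : 0 ≤ 2 / ε * δ := by positivity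
  rw [hq, Fintype.card_fin, ← one_div] at hupper hlower
  constructor
  · linarith
  · calc 1 / β * (n : ℝ) ^ (1 / p)
          = (n : ℝ) ^ (1 / p) * (1 / β - 2 / ε * δ) + (n : ℝ) ^ (1 / p) * (2 / ε * δ) := by ring
      _ ≤ (β * √n + n * (2 / ε * δ)) + n * (2 / ε * δ) :=
          add_le_add (by linarith) (mul_le_mul_of_nonneg_right hn hδ)
      _ = 4 / ε * δ * n + β * √n := by ring

/-- quantitative incompatibility of a diagonal operator on `ℓ²({1,...,n})` with
distinct entries and a diagonal operator on `ℓᵖ`, through an into-isomorphism `L`. Here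
`ε > 0` is a lower bound for the gaps `|uᵢ − uⱼ|`, `i ≠ j` (taking `ε` equal to the minimal
gap recovers the statement verbatim). -/
theorem stmt7 (p : ℝ) (hp : 1 < p) [Fact (1 ≤ ENNReal.ofReal p)]
    (n : ℕ) (hn : 1 ≤ n)
    (u : Fin n → ℂ) (hu : Function.Injective u)
    (T : EuclideanSpace ℂ (Fin n) →L[ℂ] EuclideanSpace ℂ (Fin n))
    (hT : ∀ (x : EuclideanSpace ℂ (Fin n)) (i : Fin n), T x i = u i * x i)
    (v : ℕ → ℂ)
    (D : lp (fun _ : ℕ => ℂ) (ENNReal.ofReal p) →L[ℂ] lp (fun _ : ℕ => ℂ) (ENNReal.ofReal p))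
    (hD : ∀ (x : lp (fun _ : ℕ => ℂ) (ENNReal.ofReal p)) (i : ℕ), D x i = v i * x i)
    (β : ℝ) (hβ : 1 ≤ β)
    (L : EuclideanSpace ℂ (Fin n) →L[ℂ] lp (fun _ : ℕ => ℂ) (ENNReal.ofReal p))
    (hL : ∀ x, (1 / β) * ‖x‖ ≤ ‖L x‖ ∧ ‖L x‖ ≤ β * ‖x‖)
    (ε : ℝ) (hε : 0 < ε)
    (hsep : ∀ i j, i ≠ j → ε ≤ ‖u i - u j‖) :
    (1 / β) * Real.sqrt n ≤ (2 / ε) * ‖D ∘L L - L ∘L T‖ * n + β * (n : ℝ) ^ (1 / p) ∧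
    (1 / β) * (n : ℝ) ^ (1 / p) ≤ (4 / ε) * ‖D ∘L L - L ∘L T‖ * n + β * Real.sqrt n :=
  stmt7_general p hp n u T hT v D hD β L hL ε hε hsep
end

section
/- Let d ≥ 1, let M be a nonempty compact subset of ℝ^d, and let ε > 0. Then there exist continuous functions f₁,...,f_r, g₁,...,g_r : M → [0,1] such that: (1) ∑ᵢ fᵢ ≡ 1 on M; (2) ∑ᵢ gᵢ(v) ≤ 2^d for all v ∈ M; (3) the support of each gᵢ has diameter at most ε; (4) no gᵢ is identically zero; (5) gᵢ ≡ 1 on the support of fᵢ for each i. -/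
noncomputable def psiF (t : ℝ) : ℝ := max 0 (min 1 (min (3 - 5*t) (3 + 5*t)))
noncomputable def hF (t : ℝ) : ℝ := max 0 (min 1 (min (7 - 10*t) (7 + 10*t)))

lemma psiF_cont : Continuous psiF := by unfold psiF; fun_prop
lemma hF_cont : Continuous hF := by unfold hF; fun_prop

lemma psiF_nonneg (t : ℝ) : 0 ≤ psiF t := le_max_left _ _
lemma hF_nonneg (t : ℝ) : 0 ≤ hF t := le_max_left _ _
lemma psiF_le_one (t : ℝ) : psiF t ≤ 1 := max_le zero_le_one (min_le_left _ _)
lemma hF_le_one (t : ℝ) : hF t ≤ 1 := max_le zero_le_one (min_le_left _ _)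

lemma psiF_ne_zero {t : ℝ} (h : psiF t ≠ 0) : |t| < 3/5 := by
  have hx : 0 < min 1 (min (3 - 5*t) (3 + 5*t)) := by
    by_contra hx
    push_neg at hx
    unfold psiF at h
    rw [max_eq_left hx] at h
    exact h rfl
  rw [lt_min_iff, lt_min_iff] at hx
  rw [abs_lt]
  constructor <;> linarith [hx.1, hx.2.1, hx.2.2]

lemma hF_ne_zero {t : ℝ} (h : hF t ≠ 0) : |t| ≤ 7/10 := by
  have hx : 0 < min 1 (min (7 - 10*t) (7 + 10*t)) := by
    by_contra hx
    push_neg at hx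
    unfold hF at h
    rw [max_eq_left hx] at h
    exact h rfl
  rw [lt_min_iff, lt_min_iff] at hx
  rw [abs_le]
  constructor <;> linarith [hx.1, hx.2.1, hx.2.2]

lemma hF_eq_one {t : ℝ} (h : |t| < 3/5) : hF t = 1 := by
  rw [abs_lt] at h
  unfold hF
  rw [min_eq_left (le_min (by linarith) (by linarith)), max_eq_right zero_le_one]

lemma psiF_of_ge {t : ℝ} (h : 3/5 ≤ t) : psiF t = 0 := by
  unfold psiF
  rw [min_eq_left (by linarith : 3 - 5*t ≤ 3 + 5*t),
    min_eq_right (by linarith : 3 - 5*t ≤ 1), max_eq_left (by linarith)]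

lemma psiF_of_le {t : ℝ} (h : t ≤ -(3/5)) : psiF t = 0 := by
  unfold psiF
  rw [min_eq_right (by linarith : 3 + 5*t ≤ 3 - 5*t),
    min_eq_right (by linarith : 3 + 5*t ≤ 1), max_eq_left (by linarith)]

lemma psiF_mid {t : ℝ} (h : |t| ≤ 2/5) : psiF t = 1 := by
  rw [abs_le] at h
  unfold psiF
  rw [min_eq_left (le_min (by linarith) (by linarith)), max_eq_right zero_le_one]

lemma psiF_right {t : ℝ} (h1 : 2/5 ≤ t) (h2 : t ≤ 3/5) : psiF t = 3 - 5*t := by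
  unfold psiF
  rw [min_eq_left (by linarith : 3 - 5*t ≤ 3 + 5*t),
    min_eq_right (by linarith : 3 - 5*t ≤ 1), max_eq_right (by linarith)]

lemma psiF_left {t : ℝ} (h1 : -(3/5) ≤ t) (h2 : t ≤ -(2/5)) : psiF t = 3 + 5*t := by
  unfold psiF
  rw [min_eq_right (by linarith : 3 + 5*t ≤ 3 - 5*t),
    min_eq_right (by linarith : 3 + 5*t ≤ 1), max_eq_right (by linarith)]

lemma psiF_three_sum {t : ℝ} (h : |t| ≤ 1/2) :
    psiF (t + 1) + psiF t + psiF (t - 1) = 1 := by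
  rw [abs_le] at h
  rcases le_total t 0 with ht | ht
  · rcases le_total t (-(2/5)) with h4 | h4
    · rw [psiF_right (by linarith) (by linarith : t + 1 ≤ 3/5), psiF_left (by linarith) h4,
        psiF_of_le (by linarith : t - 1 ≤ -(3/5))]
      ring
    · rw [psiF_of_ge (by linarith : 3/5 ≤ t + 1), psiF_mid (abs_le.2 ⟨h4, by linarith⟩),
        psiF_of_le (by linarith : t - 1 ≤ -(3/5))]
      ring
  · rcases le_total t (2/5) with h4 | h4
    · rw [psiF_of_ge (by linarith : 3/5 ≤ t + 1), psiF_mid (abs_le.2 ⟨by linarith, h4⟩),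
        psiF_of_le (by linarith : t - 1 ≤ -(3/5))]
      ring
    · rw [psiF_of_ge (by linarith : 3/5 ≤ t + 1), psiF_right h4 (by linarith),
        psiF_left (by linarith) (by linarith)]
      ring

lemma coord_sum_eq (u : ℝ) (S : Finset ℤ)
    (hS : ∀ m : ℤ, psiF (u - m) ≠ 0 → m ∈ S) :
    ∑ m ∈ S, psiF (u - m) = 1 := by
  set n : ℤ := ⌊u + 1/2⌋ with hn
  have hn1 : (n : ℝ) ≤ u + 1/2 := Int.floor_le _
  have hn2 : u + 1/2 < n + 1 := Int.lt_floor_add_one _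
  have ht : |u - n| ≤ 1/2 := abs_le.2 ⟨by linarith, by linarith⟩
  set T : Finset ℤ := {n - 1, n, n + 1} with hT
  have hvanish : ∀ m : ℤ, m ∉ T → psiF (u - m) = 0 := by
    intro m hm
    by_contra hne
    have h1 : |u - m| < 3/5 := psiF_ne_zero hne
    have h2 : |(m : ℝ) - n| < 2 := by
      have := abs_sub_abs_le_abs_sub ((m:ℝ) - n) 0
      calc |(m:ℝ) - n| = |(u - n) - (u - m)| := by ring_nf
        _ ≤ |u - n| + |u - m| := abs_sub _ _
        _ < 2 := by linarith
    have h3 : |m - n| < 2 := by exact_mod_cast (by push_cast; convert h2 using 2 : |((m - n : ℤ) : ℝ)| < 2)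
    rw [abs_lt] at h3
    apply hm
    simp only [hT, Finset.mem_insert, Finset.mem_singleton]
    omega
  have e1 : ∑ m ∈ S, psiF (u - m) = ∑ m ∈ S ∪ T, psiF (u - m) :=
    Finset.sum_subset Finset.subset_union_left (fun m _ hms => by
      by_contra hne; exact hms (hS m hne))
  have e2 : ∑ m ∈ T, psiF (u - m) = ∑ m ∈ S ∪ T, psiF (u - m) :=
    Finset.sum_subset Finset.subset_union_right (fun m _ hmt => hvanish m hmt)
  rw [e1, ← e2]
  have hd1 : (n - 1 : ℤ) ∉ ({n, n + 1} : Finset ℤ) := by simp; omega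
  have hd2 : (n : ℤ) ∉ ({n + 1} : Finset ℤ) := by simp
  rw [hT, Finset.sum_insert hd1, Finset.sum_insert hd2, Finset.sum_singleton]
  have key := psiF_three_sum ht
  have r1 : u - ((n : ℤ) - 1 : ℤ) = (u - n) + 1 := by push_cast; ring
  have r2 : u - ((n : ℤ) + 1 : ℤ) = (u - n) - 1 := by push_cast; ring
  rw [r1, r2]
  linarith [key]

lemma coord_sum_le (u : ℝ) (S : Finset ℤ) : ∑ m ∈ S, hF (u - m) ≤ 2 := by
  classical
  set a : ℤ := ⌈u - 7/10⌉ with ha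
  have ha1 : u - 7/10 ≤ a := Int.le_ceil _
  set T : Finset ℤ := {a, a + 1} with hT
  have hmem : ∀ m : ℤ, hF (u - m) ≠ 0 → m ∈ T := by
    intro m hne
    have h1 : |u - m| ≤ 7/10 := hF_ne_zero hne
    rw [abs_le] at h1
    have hma : a ≤ m := Int.ceil_le.2 (by linarith)
    have hm2 : (m : ℝ) < a + 2 := by linarith
    have hm3 : m < a + 2 := by exact_mod_cast hm2
    simp only [hT, Finset.mem_insert, Finset.mem_singleton]
    omega
  calc ∑ m ∈ S, hF (u - m) = ∑ m ∈ S.filter (· ∈ T), hF (u - m) :=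
        (Finset.sum_filter_of_ne (fun m _ h => hmem m h)).symm
    _ ≤ (S.filter (· ∈ T)).card • (1 : ℝ) :=
        Finset.sum_le_card_nsmul _ _ _ (fun m _ => hF_le_one _)
    _ = ((S.filter (· ∈ T)).card : ℝ) := by simp
    _ ≤ (T.card : ℝ) := by
        have hsub : S.filter (· ∈ T) ⊆ T := fun m hm => (Finset.mem_filter.1 hm).2
        exact_mod_cast Nat.cast_le.2 (Finset.card_le_card hsub)
    _ ≤ 2 := by
        have h2 : T.card ≤ 2 := by
          rw [hT]; exact (Finset.card_insert_le _ _).trans (by simp)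
        exact_mod_cast Nat.cast_le.2 h2

/-- controlled partition of unity on a nonempty compact `M ⊆ ℝ^d`: continuous
`f₁,...,f_r, g₁,...,g_r : M → [0,1]` with `∑fᵢ ≡ 1`, `∑gᵢ ≤ 2^d`, each `supp gᵢ` of diameter
at most `ε`, each `gᵢ` not identically zero, and `gᵢ ≡ 1` on `supp fᵢ`. -/
theorem stmt14 (d : ℕ) (hd : 1 ≤ d)
    (M : Set (EuclideanSpace ℝ (Fin d))) (hM : IsCompact M) (hne : M.Nonempty)
    (ε : ℝ) (hε : 0 < ε) :
    ∃ (r : ℕ) (f g : Fin r → (M → ℝ)),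
      (∀ i, Continuous (f i)) ∧ (∀ i, Continuous (g i)) ∧
      (∀ i x, f i x ∈ Set.Icc (0 : ℝ) 1) ∧
      (∀ i x, g i x ∈ Set.Icc (0 : ℝ) 1) ∧
      (∀ x, ∑ i, f i x = 1) ∧
      (∀ x, ∑ i, g i x ≤ (2 : ℝ) ^ d) ∧
      (∀ i, EMetric.diam (tsupport (g i)) ≤ ENNReal.ofReal ε) ∧
      (∀ i, ∃ x, g i x ≠ 0) ∧
      (∀ i, ∀ x ∈ tsupport (f i), g i x = 1) := by
  classical
  have hd0 : (0:ℝ) < (d:ℝ) := by exact_mod_cast Nat.lt_of_lt_of_le Nat.zero_lt_one hd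
  have hsqd : 0 < Real.sqrt d := Real.sqrt_pos.2 hd0
  set s : ℝ := ε / (2 * Real.sqrt d) with hs_def
  have hs : 0 < s := div_pos hε (by positivity)
  obtain ⟨R, hR⟩ : ∃ R, ∀ x ∈ M, ‖x‖ ≤ R :=
    isBounded_iff_forall_norm_le.1 hM.isBounded
  have hcoord : ∀ (x : EuclideanSpace ℝ (Fin d)) (i : Fin d), |x i| ≤ ‖x‖ := by
    intro x i
    rw [EuclideanSpace.norm_eq, ← Real.sqrt_sq (abs_nonneg (x i))]
    apply Real.sqrt_le_sqrt
    have h1 : |x i|^2 = ‖x i‖^2 := by rw [Real.norm_eq_abs]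
    rw [h1]
    exact Finset.single_le_sum (fun j _ => sq_nonneg ‖x j‖) (Finset.mem_univ i)
  set N : ℤ := ⌈R / s⌉ + 1 with hN
  set B : Finset (Fin d → ℤ) := Fintype.piFinset (fun _ => Finset.Icc (-N) N) with hB
  set F : (Fin d → ℤ) → M → ℝ :=
    fun z x => ∏ i, psiF ((x : EuclideanSpace ℝ (Fin d)) i / s - z i) with hF_def
  set G : (Fin d → ℤ) → M → ℝ :=
    fun z x => ∏ i, hF ((x : EuclideanSpace ℝ (Fin d)) i / s - z i) with hG_def
  -- coordinate maps continuous
  have hc : ∀ i : Fin d, Continuous (fun x : M => (x : EuclideanSpace ℝ (Fin d)) i) :=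
    fun i => (EuclideanSpace.proj (𝕜 := ℝ) i).continuous.comp continuous_subtype_val
  have hcontF : ∀ z, Continuous (F z) := by
    intro z
    apply continuous_finset_prod
    intro i _
    exact psiF_cont.comp (((hc i).div_const s).sub continuous_const)
  have hcontG : ∀ z, Continuous (G z) := by
    intro z
    apply continuous_finset_prod
    intro i _
    exact hF_cont.comp (((hc i).div_const s).sub continuous_const)
  have hmemIcc : ∀ (x : M) (i : Fin d) (m : ℤ),
      psiF ((x : EuclideanSpace ℝ (Fin d)) i / s - m) ≠ 0 → m ∈ Finset.Icc (-N) N := by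
    intro x i m hne
    have h1 := psiF_ne_zero hne
    have h2 : |(x : EuclideanSpace ℝ (Fin d)) i| ≤ R := (hcoord x.1 i).trans (hR x.1 x.2)
    have h3 : |(x : EuclideanSpace ℝ (Fin d)) i / s| ≤ R / s := by
      rw [abs_div, abs_of_pos hs]
      gcongr
    have hceil : R / s ≤ (⌈R / s⌉ : ℝ) := Int.le_ceil _
    rw [abs_lt] at h1
    rw [abs_le] at h3
    have hNcast : (N : ℝ) = (⌈R / s⌉ : ℝ) + 1 := by rw [hN]; push_cast; ring
    have hub : (m : ℝ) ≤ (N : ℝ) := by rw [hNcast]; linarith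
    have hlb : (-N : ℤ) ≤ m := by
      have : -(N : ℝ) ≤ (m : ℝ) := by rw [hNcast]; linarith
      exact_mod_cast this
    rw [Finset.mem_Icc]
    exact ⟨hlb, by exact_mod_cast hub⟩
  set Z : Finset (Fin d → ℤ) := B.filter (fun z => ∃ x : M, F z x ≠ 0) with hZ
  have hFfac : ∀ z (x : M), F z x ≠ 0 → ∀ i,
      psiF ((x : EuclideanSpace ℝ (Fin d)) i / s - z i) ≠ 0 := by
    intro z x h i h0
    exact h (Finset.prod_eq_zero (Finset.mem_univ i) h0)
  have hzB : ∀ z (x : M), F z x ≠ 0 → z ∈ B := by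
    intro z x h
    rw [hB, Fintype.mem_piFinset]
    intro i
    exact hmemIcc x i (z i) (hFfac z x h i)
  have hG1 : ∀ z (x : M), F z x ≠ 0 → G z x = 1 := by
    intro z x h
    rw [hG_def]
    refine Finset.prod_eq_one (fun i _ => ?_)
    exact hF_eq_one (psiF_ne_zero (hFfac z x h i))
  have hsumF : ∀ x : M, ∑ z ∈ Z, F z x = 1 := by
    intro x
    have e1 : ∑ z ∈ Z, F z x = ∑ z ∈ B, F z x := by
      refine Finset.sum_subset (Finset.filter_subset _ _) (fun z hz hnz => ?_)
      by_contra hne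
      exact hnz (Finset.mem_filter.2 ⟨hz, ⟨x, hne⟩⟩)
    have hps : ∏ i : Fin d, ∑ m ∈ Finset.Icc (-N) N,
        psiF ((x : EuclideanSpace ℝ (Fin d)) i / s - (m : ℝ))
        = ∑ z ∈ B, ∏ i, psiF ((x : EuclideanSpace ℝ (Fin d)) i / s - (z i : ℝ)) := by
      rw [hB]; exact Finset.prod_univ_sum _ _
    rw [e1]
    simp only [hF_def]
    rw [← hps]
    exact Finset.prod_eq_one (fun i _ => coord_sum_eq _ _ (fun m hm => hmemIcc x i m hm))
  have hGnn : ∀ z (x : M), 0 ≤ G z x :=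
    fun z x => Finset.prod_nonneg (fun i _ => hF_nonneg _)
  have hFnn : ∀ z (x : M), 0 ≤ F z x :=
    fun z x => Finset.prod_nonneg (fun i _ => psiF_nonneg _)
  have hsumG : ∀ x : M, ∑ z ∈ Z, G z x ≤ (2:ℝ)^d := by
    intro x
    calc ∑ z ∈ Z, G z x ≤ ∑ z ∈ B, G z x :=
          Finset.sum_le_sum_of_subset_of_nonneg (Finset.filter_subset _ _)
            (fun z _ _ => hGnn z x)
      _ = ∏ i : Fin d, ∑ m ∈ Finset.Icc (-N) N,
            hF ((x : EuclideanSpace ℝ (Fin d)) i / s - m) := by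
          have hps : ∏ i : Fin d, ∑ m ∈ Finset.Icc (-N) N,
              hF ((x : EuclideanSpace ℝ (Fin d)) i / s - (m : ℝ))
              = ∑ z ∈ B, ∏ i, hF ((x : EuclideanSpace ℝ (Fin d)) i / s - (z i : ℝ)) := by
            rw [hB]; exact Finset.prod_univ_sum _ _
          simp only [hG_def]
          rw [← hps]
      _ ≤ ∏ _i : Fin d, (2:ℝ) :=
          Finset.prod_le_prod (fun i _ => Finset.sum_nonneg fun m _ => hF_nonneg _)
            (fun i _ => coord_sum_le _ _)
      _ = (2:ℝ)^d := by simp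
  -- index equivalence
  set e := Z.equivFin with he
  refine ⟨Z.card, fun i => F (e.symm i).1, fun i => G (e.symm i).1, ?_, ?_, ?_, ?_, ?_, ?_, ?_, ?_, ?_⟩
  · exact fun i => hcontF _
  · exact fun i => hcontG _
  · exact fun i x => ⟨hFnn _ x, Finset.prod_le_one (fun j _ => psiF_nonneg _) (fun j _ => psiF_le_one _)⟩
  · exact fun i x => ⟨hGnn _ x, Finset.prod_le_one (fun j _ => hF_nonneg _) (fun j _ => hF_le_one _)⟩
  · intro x
    have h1 : ∑ i, F (e.symm i).1 x = ∑ w : {z // z ∈ Z}, F w.1 x :=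
      Equiv.sum_comp e.symm (fun w : {z // z ∈ Z} => F w.1 x)
    rw [h1, Finset.sum_coe_sort Z (fun z => F z x)]
    exact hsumF x
  · intro x
    have h1 : ∑ i, G (e.symm i).1 x = ∑ w : {z // z ∈ Z}, G w.1 x :=
      Equiv.sum_comp e.symm (fun w : {z // z ∈ Z} => G w.1 x)
    rw [h1, Finset.sum_coe_sort Z (fun z => G z x)]
    exact hsumG x
  · -- diameter
    intro i
    set z := (e.symm i).1 with hz
    set K : Set M := {x : M | ∀ j, |(x : EuclideanSpace ℝ (Fin d)) j - (z j) * s| ≤ (7/10) * s} with hK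
    have hKclosed : IsClosed K := by
      have : K = ⋂ j, {x : M | |(x : EuclideanSpace ℝ (Fin d)) j - (z j) * s| ≤ (7/10) * s} := by
        rw [hK]; ext x; simp [Set.mem_iInter]
      rw [this]
      refine isClosed_iInter (fun j => ?_)
      exact isClosed_le (((hc j).sub continuous_const).abs) continuous_const
    have hsupp : tsupport (fun x => G z x) ⊆ K := by
      apply closure_minimal _ hKclosed
      intro x hx
      intro j
      have hfac : hF ((x : EuclideanSpace ℝ (Fin d)) j / s - z j) ≠ 0 := by
        intro h0
        exact hx (Finset.prod_eq_zero (Finset.mem_univ j) h0)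
      have h1 := hF_ne_zero hfac
      have h2 : (x : EuclideanSpace ℝ (Fin d)) j - z j * s
          = ((x : EuclideanSpace ℝ (Fin d)) j / s - z j) * s := by
        field_simp
      rw [h2, abs_mul, abs_of_pos hs]
      exact mul_le_mul_of_nonneg_right h1 hs.le
    refine EMetric.diam_le (fun x hx y hy => ?_)
    have hxK := hsupp hx
    have hyK := hsupp hy
    rw [edist_dist]
    refine ENNReal.ofReal_le_ofReal ?_
    have hd2 : dist x y = dist (x : EuclideanSpace ℝ (Fin d)) (y : EuclideanSpace ℝ (Fin d)) :=
      Subtype.dist_eq x y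
    rw [hd2, EuclideanSpace.dist_eq]
    have hbound : ∀ j : Fin d,
        dist ((x : EuclideanSpace ℝ (Fin d)) j) ((y : EuclideanSpace ℝ (Fin d)) j) ^ 2
          ≤ ((7/5) * s)^2 := by
      intro j
      have hx1 := hxK j
      have hy1 := hyK j
      rw [Real.dist_eq]
      have habs : |(x : EuclideanSpace ℝ (Fin d)) j - (y : EuclideanSpace ℝ (Fin d)) j|
          ≤ (7/5) * s := by
        have := abs_sub ((x : EuclideanSpace ℝ (Fin d)) j - z j * s)
            ((y : EuclideanSpace ℝ (Fin d)) j - z j * s)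
        calc |(x : EuclideanSpace ℝ (Fin d)) j - (y : EuclideanSpace ℝ (Fin d)) j|
            = |((x : EuclideanSpace ℝ (Fin d)) j - z j * s)
              - ((y : EuclideanSpace ℝ (Fin d)) j - z j * s)| := by ring_nf
          _ ≤ |(x : EuclideanSpace ℝ (Fin d)) j - z j * s|
              + |(y : EuclideanSpace ℝ (Fin d)) j - z j * s| := abs_sub _ _
          _ ≤ (7/5) * s := by linarith
      have hb0 : (0:ℝ) ≤ (7/5) * s := by positivity
      exact sq_le_sq' (by linarith [abs_nonneg ((x : EuclideanSpace ℝ (Fin d)) j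
        - (y : EuclideanSpace ℝ (Fin d)) j)]) habs
    have hsum : ∑ j : Fin d, dist ((x : EuclideanSpace ℝ (Fin d)) j)
        ((y : EuclideanSpace ℝ (Fin d)) j) ^ 2 ≤ (d : ℝ) * ((7/5) * s)^2 := by
      calc ∑ j : Fin d, dist ((x : EuclideanSpace ℝ (Fin d)) j)
            ((y : EuclideanSpace ℝ (Fin d)) j) ^ 2
          ≤ ∑ _j : Fin d, ((7/5) * s)^2 := Finset.sum_le_sum (fun j _ => hbound j)
        _ = (d : ℝ) * ((7/5) * s)^2 := by simp [mul_comm]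
    have hkey : (d : ℝ) * ((7/5) * s)^2 ≤ ε^2 := by
      have hss : Real.sqrt d ^ 2 = (d : ℝ) := Real.sq_sqrt hd0.le
      have hmul : s * (2 * Real.sqrt d) = ε := by
        rw [hs_def]
        field_simp
      have he2 : ε^2 = 4 * s^2 * (d : ℝ) := by
        rw [← hmul, mul_pow, mul_pow, hss]; ring
      rw [he2]
      nlinarith [mul_nonneg (sq_nonneg s) hd0.le]
    calc Real.sqrt (∑ j : Fin d, dist ((x : EuclideanSpace ℝ (Fin d)) j)
          ((y : EuclideanSpace ℝ (Fin d)) j) ^ 2)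
        ≤ Real.sqrt (ε^2) := Real.sqrt_le_sqrt (hsum.trans hkey)
      _ = ε := Real.sqrt_sq hε.le
  · intro i
    obtain ⟨hbmem, x, hx⟩ := Finset.mem_filter.1 (e.symm i).2
    refine ⟨x, ?_⟩
    show G _ x ≠ 0
    rw [hG1 _ x hx]
    exact one_ne_zero
  · intro i x hx
    have hsub : tsupport (fun x => F (e.symm i).1 x) ⊆ {x : M | G (e.symm i).1 x = 1} := by
      apply closure_minimal _ (isClosed_eq (hcontG _) continuous_const)
      intro y hy
      exact hG1 _ y hy
    exact hsub hx
end

section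
/- Let 1 < p < ∞ and let C be a countable subset of B(ℓᵖ). Then there exist 0 = m₁ < m₂ < ... such that, with P₀ = 0 and P_r the canonical projection from ℓᵖ onto ℓᵖ({m_r+1,...,m_{r+1}}), the series ∑_{r≥1}(P_{r−1}+P_r+P_{r+1})XP_r converges in the strong operator topology and X − ∑_{r≥1}(P_{r−1}+P_r+P_{r+1})XP_r is compact, for every X ∈ C. -/
/-!
Write `R_n` for the projection onto the first `n` coordinates. For a fixed `n`, both corners
`(1 - R_k) X R_n` and `R_n X (1 - R_k)` tend to `0` in norm as `k → ∞`, since `R_n` has finite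
rank. For the second corner this rests on `1 < p`: a functional `ψ` on `ℓᵖ` satisfies
`‖ψ (1 - R_k)‖ → 0`, because if the decreasing limit `L` were positive, two disjointly supported
unit vectors on which `ψ` is almost `L` would add up to a vector of norm `2 ^ (1 / p)` on which
`ψ` is almost `2 L`, forcing `2 L ≤ 2 ^ (1 / p) L` although `2 ^ (1 / p) < 2`.

So the cut points `m r` can be chosen inductively to make the two corners at `m r`, `m (r + 1)`
of `X 0, …, X r` smaller than `2⁻ʳ`. What `X P_r` has outside `(P_{r-1} + P_r + P_{r+1}) X P_r`
consists of two such corners cut down to the block `P_r`; these finite-rank operators are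
norm-summable, and their sum is `X - B`, compact as a norm limit of compact operators.
-/

open scoped ENNReal
open Filter Function Topology Set

noncomputable section

theorem ContinuousLinearMap.exists_lt_re_apply_of_lt_opNorm {𝕜 F : Type*} [RCLike 𝕜]
    [NormedAddCommGroup F] [NormedSpace 𝕜 F] (f : F →L[𝕜] 𝕜) {r : ℝ} (hr : r < ‖f‖) :
    ∃ x, ‖x‖ ≤ 1 ∧ r < RCLike.re (f x) := by
  obtain ⟨x, hx, hrx⟩ := f.exists_lt_apply_of_lt_opNorm hr
  by_cases h0 : f x = 0
  · exact ⟨0, by simp, by simpa [h0] using hrx⟩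
  have h0' : (‖f x‖ : 𝕜) ≠ 0 := by simpa using h0
  set c : 𝕜 := starRingEnd 𝕜 (f x) / ‖f x‖
  have hc : ‖c‖ = 1 := by simp [c, norm_div, h0]
  have hfc : f (c • x) = ‖f x‖ := by
    rw [map_smul, smul_eq_mul, div_mul_eq_mul_div, RCLike.conj_mul]
    field_simp
  refine ⟨c • x, by rw [norm_smul, hc, one_mul]; exact hx.le, ?_⟩
  rwa [hfc, RCLike.ofReal_re]

namespace lp

section Indicator

variable {α 𝕜 : Type*} [RCLike 𝕜] {p : ℝ≥0∞} [Fact (1 ≤ p)]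

local notation "ℓ" => lp (fun _ : α => 𝕜) p

def indicatorCLM (s : Set α) : ℓ →L[𝕜] ℓ :=
  LinearMap.mkContinuous
    { toFun := fun x =>
        ⟨s.indicator x, (lp.memℓp x).mono' fun _ => norm_indicator_le_norm_self _ _⟩
      map_add' := fun x y => lp.ext (s.indicator_add' x y)
      map_smul' := fun c x => lp.ext (s.indicator_const_smul c x) }
    1 fun x => by
      rw [one_mul]
      exact lp.norm_mono (zero_lt_one.trans_le Fact.out).ne' fun _ =>
        norm_indicator_le_norm_self _ _

@[simp]
lemma coe_indicatorCLM_apply (s : Set α) (x : ℓ) : ⇑(indicatorCLM s x) = s.indicator x := rfl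

lemma norm_indicatorCLM_le (s : Set α) : ‖(indicatorCLM s : ℓ →L[𝕜] ℓ)‖ ≤ 1 :=
  LinearMap.mkContinuous_norm_le _ zero_le_one _

lemma norm_indicatorCLM_apply_le (s : Set α) (x : ℓ) : ‖indicatorCLM s x‖ ≤ ‖x‖ :=
  lp.norm_mono (zero_lt_one.trans_le Fact.out).ne' fun _ => norm_indicator_le_norm_self _ _

lemma indicatorCLM_comp_indicatorCLM (s t : Set α) :
    (indicatorCLM s ∘L indicatorCLM t : ℓ →L[𝕜] ℓ) = indicatorCLM (s ∩ t) := by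
  ext x : 2
  simp [indicator_indicator]

lemma indicatorCLM_union {s t : Set α} (h : Disjoint s t) :
    (indicatorCLM (s ∪ t) : ℓ →L[𝕜] ℓ) = indicatorCLM s + indicatorCLM t := by
  ext x i
  simp only [coe_indicatorCLM_apply, indicator_union_of_disjoint h, add_apply,
    AddSubgroup.coe_add]
  rfl

@[simp]
lemma indicatorCLM_univ : (indicatorCLM univ : ℓ →L[𝕜] ℓ) = 1 := by
  ext x : 2
  simp

lemma indicatorCLM_add_indicatorCLM_compl (s : Set α) :
    (indicatorCLM s + indicatorCLM sᶜ : ℓ →L[𝕜] ℓ) = 1 := by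
  rw [← indicatorCLM_union disjoint_compl_right, union_compl_self, indicatorCLM_univ]

lemma indicatorCLM_Iio_add_indicatorCLM_Ico_add_indicatorCLM_Ici [LinearOrder α] {a b : α}
    (h : a ≤ b) :
    (indicatorCLM (Iio a) + indicatorCLM (Ico a b) + indicatorCLM (Ici b) : ℓ →L[𝕜] ℓ) = 1 := by
  have hab : Disjoint (Iio a) (Ico a b) := disjoint_left.2 fun _ hi hj => not_le.2 hi hj.1
  have hb : Disjoint (Iio a ∪ Ico a b) (Ici b) :=
    Iio_union_Ico_eq_Iio h ▸ Iio_disjoint_Ici le_rfl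
  rw [← indicatorCLM_union hab, ← indicatorCLM_union hb, Iio_union_Ico_eq_Iio h, Iio_union_Ici,
    indicatorCLM_univ]

lemma hasSum_single_indicatorCLM [DecidableEq α] (hp : p ≠ ⊤) (s : Set α) (x : ℓ) :
    HasSum (fun i : s => lp.single p (i : α) (x i)) (indicatorCLM s x) := by
  have h := lp.hasSum_single hp (indicatorCLM s x)
  rw [← hasSum_subtype_iff_of_support_subset (s := s)] at h
  · convert h using 2 with i
    simp [i.2]
  · intro i hi
    by_contra his
    simp [his] at hi

lemma hasSum_indicatorCLM_fiberwise {β : Type*} (hp : p ≠ ⊤) (g : α → β) (x : ℓ) :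
    HasSum (fun b => indicatorCLM (g ⁻¹' {b}) x) x := by
  classical
  have h := (lp.hasSum_single hp x).tsum_fiberwise g
  convert h using 2 with b
  exact ((hasSum_single_indicatorCLM hp _ x).tsum_eq).symm

lemma hasSum_indicatorCLM_of_iUnion_eq_univ {β : Type*} (hp : p ≠ ⊤) {t : β → Set α}
    (hdisj : Pairwise (Disjoint on t)) (hcover : ⋃ b, t b = univ) (x : ℓ) :
    HasSum (fun b => indicatorCLM (t b) x) x := by
  have hmem (i : α) : ∃ b, i ∈ t b := mem_iUnion.1 (hcover ▸ mem_univ i)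
  choose g hg using hmem
  have hfiber (b : β) : g ⁻¹' {b} = t b := by
    ext i
    refine ⟨fun hi => (show g i = b from hi) ▸ hg i, fun hi => ?_⟩
    by_contra hne
    exact (hdisj hne).le_bot ⟨hg i, hi⟩
  simpa only [hfiber] using hasSum_indicatorCLM_fiberwise hp g x

lemma indicatorCLM_coe_finset [DecidableEq α] (s : Finset α) :
    (indicatorCLM ↑s : ℓ →L[𝕜] ℓ) =
      ∑ i ∈ s, singleContinuousLinearMap 𝕜 _ p i ∘L evalCLM 𝕜 _ p i := by
  ext x j
  rw [_root_.sum_apply, lp.coeFn_sum, Finset.sum_apply]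
  simp only [coe_indicatorCLM_apply, indicator_apply, SetLike.mem_coe,
    ContinuousLinearMap.comp_apply, singleContinuousLinearMap_apply, lp.single_apply,
    Pi.single_apply, Finset.sum_ite_eq]
  rfl

lemma isCompactOperator_indicatorCLM {s : Set α} (hs : s.Finite) :
    IsCompactOperator (indicatorCLM s : ℓ →L[𝕜] ℓ) := by
  classical
  lift s to Finset α using hs
  rw [indicatorCLM_coe_finset]
  refine Submodule.sum_mem (compactOperator (RingHom.id 𝕜) ℓ ℓ) fun i _ => ?_
  exact (isCompactOperator_of_locallyCompactSpace_dom (evalCLM 𝕜 (fun _ : α => 𝕜) p i)).clm_comp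
    (singleContinuousLinearMap 𝕜 (fun _ : α => 𝕜) p i)

lemma norm_rpow_eq_indicatorCLM_add_compl (hp : p ≠ ⊤) (s : Set α) (x : ℓ) :
    ‖x‖ ^ p.toReal = ‖indicatorCLM s x‖ ^ p.toReal + ‖indicatorCLM sᶜ x‖ ^ p.toReal := by
  have hp0 : 0 < p.toReal := ENNReal.toReal_pos (zero_lt_one.trans_le Fact.out).ne' hp
  have hsplit (i : α) : ‖x i‖ ^ p.toReal
      = ‖s.indicator x i‖ ^ p.toReal + ‖sᶜ.indicator x i‖ ^ p.toReal := by
    by_cases hi : i ∈ s <;> simp [hi, Real.zero_rpow hp0.ne']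
  simp only [lp.norm_rpow_eq_tsum hp0, coe_indicatorCLM_apply, hsplit]
  exact ((lp.memℓp (indicatorCLM s x)).summable hp0).tsum_add
    ((lp.memℓp (indicatorCLM sᶜ x)).summable hp0)

lemma norm_comp_indicatorCLM_mono {G : Type*} [NormedAddCommGroup G] [NormedSpace 𝕜 G]
    (A : ℓ →L[𝕜] G) {s t : Set α} (hst : s ⊆ t) :
    ‖A ∘L indicatorCLM s‖ ≤ ‖A ∘L indicatorCLM t‖ := by
  have h : A ∘L indicatorCLM s = (A ∘L indicatorCLM t) ∘L indicatorCLM s := by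
    rw [ContinuousLinearMap.comp_assoc, indicatorCLM_comp_indicatorCLM, inter_eq_right.2 hst]
  calc ‖A ∘L indicatorCLM s‖ ≤ ‖A ∘L indicatorCLM t‖ * ‖(indicatorCLM s : ℓ →L[𝕜] ℓ)‖ :=
        h ▸ ContinuousLinearMap.opNorm_comp_le _ _
    _ ≤ ‖A ∘L indicatorCLM t‖ :=
        mul_le_of_le_one_right (norm_nonneg _) (norm_indicatorCLM_le _)

lemma norm_add_rpow_of_indicatorCLM (hp : p ≠ ⊤) {s : Set α} {u v : ℓ}
    (hu : indicatorCLM s u = u) (hv : indicatorCLM sᶜ v = v) :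
    ‖u + v‖ ^ p.toReal = ‖u‖ ^ p.toReal + ‖v‖ ^ p.toReal := by
  have hsu : indicatorCLM sᶜ u = 0 := by
    ext i
    rw [← hu]
    by_cases hi : i ∈ s <;> simp [hi]
  have hsv : indicatorCLM s v = 0 := by
    ext i
    rw [← hv]
    by_cases hi : i ∈ s <;> simp [hi]
  rw [norm_rpow_eq_indicatorCLM_add_compl hp s, map_add, map_add, hu, hv, hsu, hsv, add_zero,
    zero_add]

lemma norm_indicatorCLM_add_indicatorCLM_compl_le (hp : p ≠ ⊤) (s : Set α) {x z : ℓ}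
    (hx : ‖x‖ ≤ 1) (hz : ‖z‖ ≤ 1) :
    ‖indicatorCLM s x + indicatorCLM sᶜ z‖ ≤ 2 ^ p.toReal⁻¹ := by
  have hp0 : 0 < p.toReal := ENNReal.toReal_pos (zero_lt_one.trans_le Fact.out).ne' hp
  have hu : indicatorCLM s (indicatorCLM s x) = indicatorCLM s x := by
    ext i; by_cases hi : i ∈ s <;> simp [hi]
  have hv : indicatorCLM sᶜ (indicatorCLM sᶜ z) = indicatorCLM sᶜ z := by
    ext i; by_cases hi : i ∈ s <;> simp [hi]
  rw [Real.le_rpow_inv_iff_of_pos (norm_nonneg _) zero_le_two hp0,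
    norm_add_rpow_of_indicatorCLM hp hu hv]
  linarith [Real.rpow_le_one (norm_nonneg _) ((norm_indicatorCLM_apply_le s x).trans hx) hp0.le,
    Real.rpow_le_one (norm_nonneg _) ((norm_indicatorCLM_apply_le sᶜ z).trans hz) hp0.le]

lemma norm_comp_indicatorCLM_finset_comp_le [DecidableEq α] {F G : Type*}
    [NormedAddCommGroup F] [NormedSpace 𝕜 F] [NormedAddCommGroup G] [NormedSpace 𝕜 G]
    (B : ℓ →L[𝕜] G) (A : F →L[𝕜] ℓ) (s : Finset α) :
    ‖B ∘L indicatorCLM ↑s ∘L A‖ ≤ ∑ i ∈ s,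
      ‖B ∘L singleContinuousLinearMap 𝕜 _ p i‖ * ‖evalCLM 𝕜 (fun _ : α => 𝕜) p i ∘L A‖ := by
  rw [indicatorCLM_coe_finset, ContinuousLinearMap.finsetSum_comp,
    ContinuousLinearMap.comp_finsetSum]
  refine (norm_sum_le _ _).trans (Finset.sum_le_sum fun i _ => ?_)
  rw [ContinuousLinearMap.comp_assoc, ← ContinuousLinearMap.comp_assoc]
  exact ContinuousLinearMap.opNorm_comp_le _ _

lemma tendsto_norm_comp_indicatorCLM_finset {ι G : Type*} [NormedAddCommGroup G]
    [NormedSpace 𝕜 G] {l : Filter ι} {B : ι → ℓ →L[𝕜] G}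
    (hB : ∀ x, Tendsto (fun k => B k x) l (𝓝 0)) (s : Finset α) :
    Tendsto (fun k => ‖B k ∘L indicatorCLM ↑s‖) l (𝓝 0) := by
  classical
  have hterm (i : α) :
      Tendsto (fun k => ‖B k ∘L singleContinuousLinearMap 𝕜 _ p i‖) l (𝓝 0) := by
    have h (k : ι) : B k ∘L singleContinuousLinearMap 𝕜 _ p i
        = ContinuousLinearMap.toSpanSingleton 𝕜 (B k (lp.single p i 1)) :=
      ContinuousLinearMap.ext_ring (by simp)
    simpa [h] using (hB (lp.single p i 1)).norm
  have hsum := tendsto_finsetSum s fun i _ =>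
    (hterm i).mul_const ‖evalCLM 𝕜 (fun _ : α => 𝕜) p i‖
  refine squeeze_zero (fun _ => norm_nonneg _) (fun k => ?_) (by simpa using hsum)
  simpa using norm_comp_indicatorCLM_finset_comp_le (B k) (ContinuousLinearMap.id 𝕜 ℓ) s

lemma tendsto_norm_indicatorCLM_finset_comp {ι F : Type*} [NormedAddCommGroup F]
    [NormedSpace 𝕜 F] {l : Filter ι} {A : ι → F →L[𝕜] ℓ}
    (hA : ∀ i, Tendsto (fun k => ‖evalCLM 𝕜 (fun _ : α => 𝕜) p i ∘L A k‖) l (𝓝 0))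
    (s : Finset α) :
    Tendsto (fun k => ‖indicatorCLM ↑s ∘L A k‖) l (𝓝 0) := by
  classical
  have hsum := tendsto_finsetSum s fun i _ =>
    (hA i).const_mul ‖singleContinuousLinearMap 𝕜 (fun _ : α => 𝕜) p i‖
  refine squeeze_zero (fun _ => norm_nonneg _) (fun k => ?_) (by simpa using hsum)
  simpa using norm_comp_indicatorCLM_finset_comp_le (ContinuousLinearMap.id 𝕜 ℓ) (A k) s

end Indicator

section NatIndex

variable {𝕜 : Type*} [RCLike 𝕜] {p : ℝ≥0∞} [Fact (1 ≤ p)]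

local notation "ℓ" => lp (fun _ : ℕ => 𝕜) p

lemma tendsto_indicatorCLM_Iio (hp : p ≠ ⊤) (x : ℓ) :
    Tendsto (fun n => indicatorCLM (Iio n) x) atTop (𝓝 x) := by
  convert (lp.hasSum_single hp x).tendsto_sum_nat using 2 with n
  rw [← Finset.coe_range, indicatorCLM_coe_finset, _root_.sum_apply]
  rfl

lemma tendsto_indicatorCLM_Ici (hp : p ≠ ⊤) (x : ℓ) :
    Tendsto (fun n => indicatorCLM (Ici n) x) atTop (𝓝 0) := by
  have h (n : ℕ) : indicatorCLM (Ici n) x = x - indicatorCLM (Iio n) x := by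
    rw [eq_sub_iff_add_eq', ← add_apply, ← compl_Iio,
      indicatorCLM_add_indicatorCLM_compl, one_apply_eq_self]
  simpa [h] using (tendsto_const_nhds (x := x)).sub (tendsto_indicatorCLM_Iio hp x)

lemma two_mul_le_rpow_mul_norm_comp_indicatorCLM_Ici (hp : p ≠ ⊤) (ψ : ℓ →L[𝕜] 𝕜) {a : ℝ}
    (ha : ∀ k, a < ‖ψ ∘L indicatorCLM (Ici k)‖) (n : ℕ) :
    2 * a ≤ 2 ^ p.toReal⁻¹ * ‖ψ ∘L indicatorCLM (Ici n)‖ := by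
  obtain ⟨x, hx, hxa⟩ := (ψ ∘L indicatorCLM (Ici n)).exists_lt_re_apply_of_lt_opNorm (ha n)
  set u₀ := indicatorCLM (Ici n) x
  have hlim : Tendsto (fun k => RCLike.re (ψ (indicatorCLM (Iio k) u₀))) atTop
      (𝓝 (RCLike.re (ψ u₀))) :=
    (RCLike.continuous_re.tendsto _).comp
      ((ψ.continuous.tendsto _).comp (tendsto_indicatorCLM_Iio hp u₀))
  obtain ⟨n', hnn', hua⟩ :=
    ((eventually_ge_atTop n).and (hlim.eventually (lt_mem_nhds hxa))).exists
  obtain ⟨z, hz, hza⟩ := (ψ ∘L indicatorCLM (Ici n')).exists_lt_re_apply_of_lt_opNorm (ha n')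
  set u := indicatorCLM (Iio n') u₀
  set v := indicatorCLM (Ici n') z
  have hsupp : indicatorCLM (Ici n) (u + v) = u + v := by
    have hun : indicatorCLM (Ici n) u = u := by
      ext i; by_cases hi : n ≤ i <;> simp [u, u₀, hi, indicator_apply]
    have hvn : indicatorCLM (Ici n) v = v := by
      ext i
      by_cases hi : n ≤ i
      · simp [hi]
      · simp [v, hi, show ¬n' ≤ i by omega]
    rw [map_add, hun, hvn]
  have hnorm : ‖u + v‖ ≤ 2 ^ p.toReal⁻¹ := by
    simpa only [compl_Iio] using norm_indicatorCLM_add_indicatorCLM_compl_le hp (Iio n')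
      ((norm_indicatorCLM_apply_le _ _).trans hx) hz
  calc 2 * a ≤ RCLike.re (ψ u) + RCLike.re (ψ v) := by
        simp only [ContinuousLinearMap.comp_apply] at hua hza
        linarith
    _ = RCLike.re (ψ (u + v)) := by rw [map_add, map_add]
    _ ≤ ‖(ψ ∘L indicatorCLM (Ici n)) (u + v)‖ := by
        rw [ContinuousLinearMap.comp_apply, hsupp]
        exact RCLike.re_le_norm _
    _ ≤ ‖ψ ∘L indicatorCLM (Ici n)‖ * ‖u + v‖ := ContinuousLinearMap.le_opNorm _ _
    _ ≤ 2 ^ p.toReal⁻¹ * ‖ψ ∘L indicatorCLM (Ici n)‖ := by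
        rw [mul_comm]
        gcongr

theorem tendsto_norm_comp_indicatorCLM_Ici (hp₁ : 1 < p) (hp : p ≠ ⊤) (ψ : ℓ →L[𝕜] 𝕜) :
    Tendsto (fun n => ‖ψ ∘L indicatorCLM (Ici n)‖) atTop (𝓝 0) := by
  set c : ℕ → ℝ := fun n => ‖ψ ∘L indicatorCLM (Ici n)‖
  have hanti : Antitone c := fun a b hab =>
    norm_comp_indicatorCLM_mono ψ (Ici_subset_Ici.2 hab)
  have hbdd : BddBelow (range c) := ⟨0, by rintro _ ⟨n, rfl⟩; exact norm_nonneg _⟩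
  have hc := tendsto_atTop_ciInf hanti hbdd
  set L := ⨅ n, c n
  have hL : 0 ≤ L := le_ciInf fun n => norm_nonneg _
  have hθ : (2 : ℝ) ^ p.toReal⁻¹ < 2 := by
    have h1 : 1 < p.toReal := by
      rw [← ENNReal.toReal_one]
      exact (ENNReal.toReal_lt_toReal ENNReal.one_ne_top hp).2 hp₁
    simpa using Real.rpow_lt_rpow_of_exponent_lt one_lt_two (inv_lt_one_of_one_lt₀ h1)
  have hkey (n : ℕ) : 2 * L ≤ 2 ^ p.toReal⁻¹ * c n := by
    refine le_of_forall_lt_imp_le_of_dense fun b hb => ?_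
    have := two_mul_le_rpow_mul_norm_comp_indicatorCLM_Ici hp ψ
      (a := b / 2) (fun k => by linarith [ciInf_le hbdd k]) n
    linarith
  have hlim : 2 * L ≤ 2 ^ p.toReal⁻¹ * L := ge_of_tendsto' (hc.const_mul _) hkey
  have hL0 : L = 0 := by nlinarith
  rwa [hL0] at hc

def HasSmallCorners (Y : ℓ →L[𝕜] ℓ) (a b : ℕ) (ε : ℝ) : Prop :=
  ‖indicatorCLM (Ici b) ∘L Y ∘L indicatorCLM (Iio a)‖ ≤ ε ∧
    ‖indicatorCLM (Iio a) ∘L Y ∘L indicatorCLM (Ici b)‖ ≤ ε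

lemma exists_cut (hp₁ : 1 < p) (hp : p ≠ ⊤) (X : ℕ → ℓ →L[𝕜] ℓ) (r n : ℕ) :
    ∃ n' > n, ∀ j ≤ r, HasSmallCorners (X j) n n' (2⁻¹ ^ r) := by
  have hsmall (j : ℕ) : ∀ᶠ k in atTop, HasSmallCorners (X j) n k (2⁻¹ ^ r) := by
    have hright := tendsto_norm_comp_indicatorCLM_finset
      (B := fun k => indicatorCLM (Ici k) ∘L X j)
      (fun x => tendsto_indicatorCLM_Ici hp (X j x)) (Finset.range n)
    have hleft := tendsto_norm_indicatorCLM_finset_comp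
      (A := fun k => X j ∘L indicatorCLM (Ici k))
      (fun i => by simpa only [ContinuousLinearMap.comp_assoc] using
        tendsto_norm_comp_indicatorCLM_Ici hp₁ hp (evalCLM 𝕜 _ p i ∘L X j)) (Finset.range n)
    simp only [Finset.coe_range, ContinuousLinearMap.comp_assoc] at hright hleft
    exact (hright.eventually_le_const (by positivity)).and
      (hleft.eventually_le_const (by positivity))
  obtain ⟨n', hn', hsmall'⟩ := ((eventually_gt_atTop n).and
    ((eventually_all_finset (Finset.range (r + 1))).2 fun j _ => hsmall j)).exists
  exact ⟨n', hn', fun j hj => hsmall' j (Finset.mem_range.2 (Nat.lt_succ_of_le hj))⟩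

theorem exists_cuts (hp₁ : 1 < p) (hp : p ≠ ⊤) (X : ℕ → ℓ →L[𝕜] ℓ) :
    ∃ m : ℕ → ℕ, m 0 = 0 ∧ StrictMono m ∧
      ∀ r, ∀ j ≤ r, HasSmallCorners (X j) (m r) (m (r + 1)) (2⁻¹ ^ r) := by
  choose f hf using exists_cut hp₁ hp X
  let m : ℕ → ℕ := fun r => Nat.rec 0 f r
  exact ⟨m, rfl, strictMono_nat_of_lt_succ fun r => (hf r (m r)).1, fun r => (hf r (m r)).2⟩

def blockProj (m : ℕ → ℕ) : ℕ → ℓ →L[𝕜] ℓ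
  | 0 => 0
  | r + 1 => indicatorCLM (Ico (m r) (m (r + 1)))

lemma hasSum_blockProj_succ (hp : p ≠ ⊤) {m : ℕ → ℕ} (hm0 : m 0 = 0) (hm : StrictMono m)
    (x : ℓ) : HasSum (fun r => blockProj m (r + 1) x) x := by
  refine hasSum_indicatorCLM_of_iUnion_eq_univ hp (t := fun r => Ico (m r) (m (r + 1))) ?_ ?_ x
  · simpa using hm.monotone.pairwise_disjoint_on_Ico_succ
  · simpa [hm0] using iUnion_Ico_map_succ_eq_Ici (fun a => (hm.monotone (Nat.zero_le a)))
      hm.not_bddAbove_range_of_wellFoundedLT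

lemma isCompactOperator_blockProj (m : ℕ → ℕ) (r : ℕ) :
    IsCompactOperator (blockProj m r : ℓ →L[𝕜] ℓ) := by
  cases r with
  | zero => exact isCompactOperator_zero
  | succ r => exact isCompactOperator_indicatorCLM (finite_Ico _ _)

lemma blockProj_add_blockProj_add_blockProj {m : ℕ → ℕ} (hm : Monotone m) (s : ℕ) :
    (blockProj m (s + 1) + blockProj m (s + 2) + blockProj m (s + 3) : ℓ →L[𝕜] ℓ) =
      indicatorCLM (Ico (m s) (m (s + 3))) := by
  simp only [blockProj]
  rw [← indicatorCLM_union Ico_disjoint_Ico_same,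
    Ico_union_Ico_eq_Ico (hm (by omega)) (hm (by omega)),
    ← indicatorCLM_union Ico_disjoint_Ico_same,
    Ico_union_Ico_eq_Ico (hm (by omega)) (hm (by omega))]

def offTridiagonal (m : ℕ → ℕ) (Y : ℓ →L[𝕜] ℓ) (k : ℕ) : ℓ →L[𝕜] ℓ :=
  Y ∘L blockProj m (k + 1) -
    (blockProj m k + blockProj m (k + 1) + blockProj m (k + 2)) ∘L Y ∘L blockProj m (k + 1)

lemma isCompactOperator_offTridiagonal (m : ℕ → ℕ) (Y : ℓ →L[𝕜] ℓ) (k : ℕ) :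
    IsCompactOperator (offTridiagonal m Y k) := by
  have h := (isCompactOperator_blockProj m (k + 1)).clm_comp Y
  have h' := h.clm_comp (blockProj m k + blockProj m (k + 1) + blockProj m (k + 2))
  rw [offTridiagonal, FunLike.coe_sub]
  simpa only [ContinuousLinearMap.coe_comp] using h.sub h'

lemma offTridiagonal_succ {m : ℕ → ℕ} (hm : Monotone m) (Y : ℓ →L[𝕜] ℓ) (s : ℕ) :
    offTridiagonal m Y (s + 1) =
      (indicatorCLM (Iio (m s)) + indicatorCLM (Ici (m (s + 3)))) ∘L
        Y ∘L indicatorCLM (Ico (m (s + 1)) (m (s + 2))) := by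
  have h1 := indicatorCLM_Iio_add_indicatorCLM_Ico_add_indicatorCLM_Ici (𝕜 := 𝕜) (p := p)
    (hm (show s ≤ s + 3 by omega))
  have hb : blockProj m (s + 2) = (indicatorCLM (Ico (m (s + 1)) (m (s + 2))) : ℓ →L[𝕜] ℓ) :=
    rfl
  rw [offTridiagonal, blockProj_add_blockProj_add_blockProj hm, hb, sub_eq_iff_eq_add]
  conv_lhs =>
    rw [← ContinuousLinearMap.id_comp (Y ∘L _), ← ContinuousLinearMap.one_def, ← h1]
  simp only [ContinuousLinearMap.add_comp]
  abel

lemma norm_offTridiagonal_succ_le {m : ℕ → ℕ} (hm : Monotone m) {Y : ℓ →L[𝕜] ℓ} {s : ℕ}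
    (hs : HasSmallCorners Y (m s) (m (s + 1)) (2⁻¹ ^ s))
    (hs₂ : HasSmallCorners Y (m (s + 2)) (m (s + 3)) (2⁻¹ ^ (s + 2))) :
    ‖offTridiagonal m Y (s + 1)‖ ≤ 2 * 2⁻¹ ^ s := by
  set I := Ico (m (s + 1)) (m (s + 2))
  have hleft : ‖indicatorCLM (Iio (m s)) ∘L Y ∘L indicatorCLM I‖ ≤ 2⁻¹ ^ s := by
    refine le_trans ?_ hs.2
    simpa only [ContinuousLinearMap.comp_assoc] using norm_comp_indicatorCLM_mono
      (indicatorCLM (Iio (m s)) ∘L Y) (Ico_subset_Ici_self : I ⊆ _)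
  have hright : ‖indicatorCLM (Ici (m (s + 3))) ∘L Y ∘L indicatorCLM I‖ ≤ 2⁻¹ ^ (s + 2) := by
    refine le_trans ?_ hs₂.1
    simpa only [ContinuousLinearMap.comp_assoc] using norm_comp_indicatorCLM_mono
      (indicatorCLM (Ici (m (s + 3))) ∘L Y) (Ico_subset_Iio_self : I ⊆ _)
  rw [offTridiagonal_succ hm, ContinuousLinearMap.add_comp]
  refine (norm_add_le _ _).trans ?_
  have : (2⁻¹ : ℝ) ^ (s + 2) ≤ 2⁻¹ ^ s :=
    pow_le_pow_of_le_one (by norm_num) (by norm_num) (by omega)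
  linarith

lemma summable_offTridiagonal {m : ℕ → ℕ} (hm : Monotone m) {Y : ℓ →L[𝕜] ℓ}
    (hY : ∀ᶠ r in atTop, HasSmallCorners Y (m r) (m (r + 1)) (2⁻¹ ^ r)) :
    Summable (offTridiagonal m Y) := by
  refine (summable_nat_add_iff 1).1 <| Summable.of_norm_bounded_eventually_nat
    ((summable_geometric_of_lt_one (by norm_num) (by norm_num : (2⁻¹ : ℝ) < 1)).mul_left 2) ?_
  filter_upwards [hY, (tendsto_add_atTop_nat 2).eventually hY] with s hs hs₂
  exact norm_offTridiagonal_succ_le hm hs hs₂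

theorem exists_hasSum_tridiagonal (hp : p ≠ ⊤) {m : ℕ → ℕ} (hm0 : m 0 = 0)
    (hm : StrictMono m) {Y : ℓ →L[𝕜] ℓ}
    (hY : ∀ᶠ r in atTop, HasSmallCorners Y (m r) (m (r + 1)) (2⁻¹ ^ r)) :
    ∃ B : ℓ →L[𝕜] ℓ, (∀ x, HasSum (fun k => ((blockProj m k + blockProj m (k + 1) +
      blockProj m (k + 2)) ∘L Y ∘L blockProj m (k + 1)) x) (B x)) ∧
      IsCompactOperator (Y - B) := by
  have hK := (summable_offTridiagonal hm.monotone hY).hasSum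
  refine ⟨Y - ∑' k, offTridiagonal m Y k, fun x => ?_, ?_⟩
  · have h := ((hasSum_blockProj_succ hp hm0 hm x).mapL Y).sub
      (hK.mapL (ContinuousLinearMap.apply 𝕜 ℓ x))
    simpa [offTridiagonal] using h
  · rw [sub_sub_cancel]
    refine isCompactOperator_of_tendsto hK.tendsto_sum_nat (Eventually.of_forall fun n => ?_)
    exact Submodule.sum_mem (compactOperator (RingHom.id 𝕜) ℓ ℓ) fun k _ =>
      isCompactOperator_offTridiagonal m Y k

end NatIndex

end lp

end

/-- simultaneous quasi-tridiagonalization. For a countable family `X : ℕ → B(ℓᵖ)`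
there are blocks `[m r, m (r+1))` (with `m 0 = 0`, `m` strictly monotone) and corresponding
coordinate projections `P` (`P 0 = 0`, `P (r+1)` projecting onto coordinates in
`[m r, m (r+1))`) such that for each member `X j` the tridiagonal series
`∑_{r≥1} (P_{r−1} + P_r + P_{r+1}) (X j) P_r` converges in the strong operator topology to
some `B` with `X j − B` compact. -/
theorem stmt16 (p : ℝ≥0∞) [Fact (1 ≤ p)] (hp : 1 < p) (hp' : p ≠ ⊤)
    (X : ℕ → (lp (fun _ : ℕ => ℂ) p →L[ℂ] lp (fun _ : ℕ => ℂ) p)) :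
    ∃ (m : ℕ → ℕ) (P : ℕ → (lp (fun _ : ℕ => ℂ) p →L[ℂ] lp (fun _ : ℕ => ℂ) p)),
      m 0 = 0 ∧ StrictMono m ∧ P 0 = 0 ∧
      (∀ (r : ℕ) (x : lp (fun _ : ℕ => ℂ) p) (i : ℕ),
        (P (r + 1)) x i = if m r ≤ i ∧ i < m (r + 1) then x i else 0) ∧
      ∀ j : ℕ, ∃ B : lp (fun _ : ℕ => ℂ) p →L[ℂ] lp (fun _ : ℕ => ℂ) p,
        (∀ x : lp (fun _ : ℕ => ℂ) p,
          HasSum (fun k : ℕ => ((P k + P (k + 1) + P (k + 2)) ∘L X j ∘L P (k + 1)) x) (B x)) ∧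
        IsCompactOperator (X j - B) := by
  obtain ⟨m, hm0, hm, hcorners⟩ := lp.exists_cuts hp hp' X
  refine ⟨m, lp.blockProj m, hm0, hm, rfl, fun r x i => ?_, fun j => ?_⟩
  · simp [lp.blockProj, indicator_apply]
  · exact lp.exists_hasSum_tridiagonal hp' hm0 hm
      (eventually_atTop.2 ⟨j, fun r hr => hcorners r j hr⟩)
end

section
/- Given integers 1 ≤ r(1) < r(2) < ..., there exist functions t_k : ℕ → {0/2^k, 1/2^k, ..., 2^k/2^k} for k ≥ 1 such that: (i) |t_{k+1}(r) − t_k(r)| ≤ 2/k for all r, k ≥ 1; (ii) |t_k(r+1) − t_k(r)| ≤ 2/k for all r, k ≥ 1; (iii) t_k is nondecreasing in r; (iv) t_k(r) = 0 for all r ≤ r(k); (v) for every k there exists s₀ with t_k(r) = 1 for all r ≥ s₀. -/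
/-!
At level `j` the function `t_{2^j}` is a ramp climbing from `0` to `1` in steps of `1/2^j`,
starting at `r(2^(j+1))`; for `2^j ≤ k < 2^(j+1)` the function `t_k` moves linearly from the
level-`j` ramp to the level-`(j+1)` ramp as `k` runs through the level. Consecutive `t_k` thus
differ by `1/2^j` times a difference of two `[0,1]`-valued functions, while every `t_k` inherits
monotonicity and increments at most `1/2^j` from the two ramps; both bounds are `≤ 2/k`
because `k < 2^(j+1)`. Writing the interpolation over the common denominator `2^(2j+1)` shows that
`t_k` takes values in `2^(-k) ℕ ∩ [0,1]`, as `2j + 1 ≤ 2^j < k` away from the level's start.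
-/

open Nat (log)

lemma exists_eq_div_two_pow_of_le {d k : ℕ} {x : ℝ} (hdk : d ≤ k)
    (hx : ∃ n : ℕ, n ≤ 2 ^ d ∧ x = n / 2 ^ d) : ∃ n : ℕ, n ≤ 2 ^ k ∧ x = n / 2 ^ k := by
  obtain ⟨n, hn, rfl⟩ := hx
  have hk : 2 ^ k = 2 ^ d * 2 ^ (k - d) := by rw [← pow_add, Nat.add_sub_cancel' hdk]
  refine ⟨n * 2 ^ (k - d), by rw [hk]; gcongr, ?_⟩
  rw [show (2 : ℝ) ^ k = 2 ^ d * 2 ^ (k - d) by exact_mod_cast hk]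
  push_cast
  field_simp

lemma two_mul_le_two_pow (j : ℕ) : 2 * j ≤ 2 ^ j := by
  induction j with
  | zero => simp
  | succ n ih => rw [pow_succ]; have := n.one_le_two_pow; omega

lemma two_pow_log_le_and_lt_two_mul {k : ℕ} (hk : k ≠ 0) :
    2 ^ log 2 k ≤ k ∧ k < 2 * 2 ^ log 2 k := by
  have := Nat.lt_pow_succ_log_self one_lt_two k
  rw [pow_succ] at this
  exact ⟨Nat.pow_log_le_self 2 hk, by omega⟩

lemma one_div_two_pow_log_le_two_div {k : ℕ} (hk : k ≠ 0) : (1 : ℝ) / 2 ^ log 2 k ≤ 2 / k := by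
  have hlt : (k : ℝ) < 2 * 2 ^ log 2 k := by exact_mod_cast (two_pow_log_le_and_lt_two_mul hk).2
  rw [div_le_div_iff₀ (by positivity) (by positivity)]
  linarith

section Lerp

variable {x x' y y' c : ℝ}

lemma lerp_le_lerp (hc0 : 0 ≤ c) (hc1 : c ≤ 1) (hx : x ≤ x') (hy : y ≤ y') :
    x + c * (y - x) ≤ x' + c * (y' - x') := by
  nlinarith

lemma abs_lerp_sub_lerp_le {ε : ℝ} (hc0 : 0 ≤ c) (hc1 : c ≤ 1) (hx : |x' - x| ≤ ε)
    (hy : |y' - y| ≤ ε) : |x' + c * (y' - x') - (x + c * (y - x))| ≤ ε :=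
  calc |x' + c * (y' - x') - (x + c * (y - x))| = |(1 - c) * (x' - x) + c * (y' - y)| := by
        ring_nf
    _ ≤ (1 - c) * |x' - x| + c * |y' - y| := by
        refine (abs_add_le _ _).trans ?_
        rw [abs_mul, abs_mul, abs_of_nonneg (by linarith), abs_of_nonneg hc0]
    _ ≤ (1 - c) * ε + c * ε := by gcongr
    _ = ε := by ring

end Lerp

/-- The ramp from `0` to `1` that starts at `a` and climbs in steps of `1/2^j`. -/
noncomputable def ramp (a j s : ℕ) : ℝ :=
  (min (2 ^ j) (s - a) : ℕ) / 2 ^ j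

section Ramp

variable (a j s : ℕ)

lemma ramp_nonneg : 0 ≤ ramp a j s := by
  unfold ramp
  positivity

lemma ramp_le_one : ramp a j s ≤ 1 := by
  rw [ramp, div_le_one (by positivity)]
  exact_mod_cast min_le_left _ _

lemma ramp_le_ramp_succ : ramp a j s ≤ ramp a j (s + 1) := by
  unfold ramp
  gcongr
  omega

lemma ramp_succ_le : ramp a j (s + 1) ≤ ramp a j s + 1 / 2 ^ j := by
  rw [ramp, ramp, ← add_div]
  gcongr
  exact_mod_cast (show min (2 ^ j) (s + 1 - a) ≤ min (2 ^ j) (s - a) + 1 by omega)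

lemma abs_ramp_succ_sub_le : |ramp a j (s + 1) - ramp a j s| ≤ 1 / 2 ^ j := by
  rw [abs_of_nonneg (sub_nonneg.2 (ramp_le_ramp_succ a j s))]
  linarith [ramp_succ_le a j s]

variable {a j s}

lemma ramp_eq_zero (h : s ≤ a) : ramp a j s = 0 := by
  simp [ramp, Nat.sub_eq_zero_of_le h]

lemma ramp_eq_one (h : a + 2 ^ j ≤ s) : ramp a j s = 1 := by
  rw [ramp, min_eq_left (by omega)]
  push_cast
  exact div_self (by positivity)

end Ramp

/-- The point `m/2^j` of the way from the level-`j` ramp, which starts at `a j`, to the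
level-`(j+1)` ramp, which starts at `a (j+1)`. -/
noncomputable def levelInterp (a : ℕ → ℕ) (j m s : ℕ) : ℝ :=
  ramp (a j) j s + ((m : ℝ) / 2 ^ j) * (ramp (a (j + 1)) (j + 1) s - ramp (a j) j s)

/-- The paper's `t_k` when the level-`j` ramp starts at `a j`; the paper takes
`a j = r (2^(j+1))`. -/
noncomputable def interpRamp (a : ℕ → ℕ) (k s : ℕ) : ℝ :=
  levelInterp a (log 2 k) (k - 2 ^ log 2 k) s

section LevelInterp

variable (a : ℕ → ℕ) {j m : ℕ} (s : ℕ)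

lemma levelInterp_zero : levelInterp a j 0 s = ramp (a j) j s := by
  simp [levelInterp]

lemma levelInterp_two_pow : levelInterp a j (2 ^ j) s = levelInterp a (j + 1) 0 s := by
  simp [levelInterp]

lemma levelInterp_succ_sub :
    levelInterp a j (m + 1) s - levelInterp a j m s =
      (ramp (a (j + 1)) (j + 1) s - ramp (a j) j s) / 2 ^ j := by
  unfold levelInterp
  push_cast
  ring

lemma levelInterp_le_apply_succ (hm : m ≤ 2 ^ j) :
    levelInterp a j m s ≤ levelInterp a j m (s + 1) :=
  lerp_le_lerp (by positivity) (div_le_one_of_le₀ (by exact_mod_cast hm) (by positivity))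
    (ramp_le_ramp_succ _ _ _) (ramp_le_ramp_succ _ _ _)

lemma abs_levelInterp_apply_succ_sub_le (hm : m ≤ 2 ^ j) :
    |levelInterp a j m (s + 1) - levelInterp a j m s| ≤ 1 / 2 ^ j := by
  have hstep : (1 : ℝ) / 2 ^ (j + 1) ≤ 1 / 2 ^ j := by gcongr <;> norm_num
  exact abs_lerp_sub_lerp_le (by positivity)
    (div_le_one_of_le₀ (by exact_mod_cast hm) (by positivity))
    (abs_ramp_succ_sub_le _ _ _) ((abs_ramp_succ_sub_le _ _ _).trans hstep)

lemma exists_levelInterp_eq_div (hm : m ≤ 2 ^ j) :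
    ∃ n : ℕ, n ≤ 2 ^ (2 * j + 1) ∧ levelInterp a j m s = n / 2 ^ (2 * j + 1) := by
  obtain ⟨b, hb, hramp⟩ : ∃ b : ℕ, b ≤ 2 ^ j ∧ ramp (a j) j s = b / 2 ^ j :=
    ⟨_, min_le_left _ _, rfl⟩
  obtain ⟨b', hb', hramp'⟩ :
      ∃ b' : ℕ, b' ≤ 2 ^ (j + 1) ∧ ramp (a (j + 1)) (j + 1) s = b' / 2 ^ (j + 1) :=
    ⟨_, min_le_left _ _, rfl⟩
  have hb2 : 2 * b ≤ 2 ^ (j + 1) := by rw [pow_succ]; omega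
  refine ⟨(2 ^ j - m) * (2 * b) + m * b', ?_, ?_⟩
  · calc (2 ^ j - m) * (2 * b) + m * b' ≤ (2 ^ j - m) * 2 ^ (j + 1) + m * 2 ^ (j + 1) := by
          gcongr
      _ = 2 ^ (2 * j + 1) := by
          rw [← add_mul, Nat.sub_add_cancel hm, ← pow_add]; ring_nf
  · rw [levelInterp, hramp, hramp']
    push_cast [Nat.cast_sub hm]
    field_simp
    ring

lemma levelInterp_eq_zero (h : s ≤ a j) (h' : s ≤ a (j + 1)) : levelInterp a j m s = 0 := by
  simp [levelInterp, ramp_eq_zero h, ramp_eq_zero h']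

lemma levelInterp_eq_one (h : a j + 2 ^ j ≤ s) (h' : a (j + 1) + 2 ^ (j + 1) ≤ s) :
    levelInterp a j m s = 1 := by
  simp [levelInterp, ramp_eq_one h, ramp_eq_one h']

end LevelInterp

section InterpRamp

variable (a : ℕ → ℕ) {k : ℕ} (s : ℕ)

lemma interpRamp_succ (hk : k ≠ 0) :
    interpRamp a (k + 1) s = levelInterp a (log 2 k) (k - 2 ^ log 2 k + 1) s := by
  obtain ⟨hlo, hhi⟩ := two_pow_log_le_and_lt_two_mul hk
  rcases Nat.lt_or_ge (k + 1) (2 ^ (log 2 k + 1)) with hlt | hge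
  · rw [interpRamp, Nat.log_eq_of_pow_le_of_lt_pow (by omega) hlt]
    congr 2
    omega
  · have heq : k + 1 = 2 ^ (log 2 k + 1) := by rw [pow_succ] at hge ⊢; omega
    rw [interpRamp, heq, Nat.log_pow one_lt_two, Nat.sub_self,
      show k - 2 ^ log 2 k + 1 = 2 ^ log 2 k by omega, levelInterp_two_pow]

lemma abs_interpRamp_succ_sub_le (hk : k ≠ 0) :
    |interpRamp a (k + 1) s - interpRamp a k s| ≤ 1 / 2 ^ log 2 k := by
  rw [interpRamp_succ a s hk, interpRamp, levelInterp_succ_sub, abs_div,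
    abs_of_pos (by positivity : (0 : ℝ) < 2 ^ log 2 k)]
  refine div_le_div_of_nonneg_right ?_ (by positivity)
  exact abs_sub_le_of_nonneg_of_le (ramp_nonneg _ _ _) (ramp_le_one _ _ _) (ramp_nonneg _ _ _)
    (ramp_le_one _ _ _)

lemma interpRamp_le_apply_succ (hk : k ≠ 0) : interpRamp a k s ≤ interpRamp a k (s + 1) :=
  levelInterp_le_apply_succ a s (by have := two_pow_log_le_and_lt_two_mul hk; omega)

lemma abs_interpRamp_apply_succ_sub_le (hk : k ≠ 0) :
    |interpRamp a k (s + 1) - interpRamp a k s| ≤ 1 / 2 ^ log 2 k :=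
  abs_levelInterp_apply_succ_sub_le a s (by have := two_pow_log_le_and_lt_two_mul hk; omega)

lemma exists_interpRamp_eq_div (hk : k ≠ 0) :
    ∃ n : ℕ, n ≤ 2 ^ k ∧ interpRamp a k s = n / 2 ^ k := by
  obtain ⟨hlo, hhi⟩ := two_pow_log_le_and_lt_two_mul hk
  rcases hlo.eq_or_lt with heq | hlt
  · refine exists_eq_div_two_pow_of_le (Nat.lt_two_pow_self.le.trans hlo)
      ⟨_, min_le_left _ (s - a (log 2 k)), ?_⟩
    rw [interpRamp, Nat.sub_eq_zero_of_le heq.ge, levelInterp_zero, ramp]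
  · refine exists_eq_div_two_pow_of_le ?_ (exists_levelInterp_eq_div a s (by omega))
    have := two_mul_le_two_pow (log 2 k)
    omega

lemma interpRamp_eq_zero (ha : Monotone a) (h : s ≤ a (log 2 k)) : interpRamp a k s = 0 :=
  levelInterp_eq_zero a s h (h.trans (ha (Nat.le_succ _)))

end InterpRamp

lemma exists_interpRamp_eq_one (a : ℕ → ℕ) (k : ℕ) :
    ∃ s₀, ∀ s, s₀ ≤ s → interpRamp a k s = 1 := by
  have := Nat.pow_le_pow_right two_pos (log 2 k).le_succ
  exact ⟨a (log 2 k) + a (log 2 k + 1) + 2 ^ (log 2 k + 1),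
    fun s hs => levelInterp_eq_one a s (by omega) (by omega)⟩

theorem stmt18_general (r : ℕ → ℕ) (hr : StrictMono r) :
    ∃ t : ℕ → ℕ → ℝ,
      (∀ k, 1 ≤ k → ∀ s, ∃ j : ℕ, j ≤ 2 ^ k ∧ t k s = (j : ℝ) / 2 ^ k) ∧
      (∀ k, 1 ≤ k → ∀ s, |t (k + 1) s - t k s| ≤ 2 / (k : ℝ)) ∧
      (∀ k, 1 ≤ k → ∀ s, |t k (s + 1) - t k s| ≤ 2 / (k : ℝ)) ∧
      (∀ k, 1 ≤ k → ∀ s, t k s ≤ t k (s + 1)) ∧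
      (∀ k, 1 ≤ k → ∀ s, s ≤ r k → t k s = 0) ∧
      (∀ k, 1 ≤ k → ∃ s₀, ∀ s, s₀ ≤ s → t k s = 1) := by
  set a : ℕ → ℕ := fun j => r (2 ^ (j + 1))
  have ha : Monotone a := fun i j hij =>
    hr.monotone (Nat.pow_le_pow_right two_pos (Nat.succ_le_succ hij))
  refine ⟨interpRamp a, fun k hk s => exists_interpRamp_eq_div a s (by omega),
    fun k hk s => ?_, fun k hk s => ?_, fun k hk s => interpRamp_le_apply_succ a s (by omega),
    fun k hk s hs => interpRamp_eq_zero a s ha ?_, fun k _ => exists_interpRamp_eq_one a k⟩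
  · exact (abs_interpRamp_succ_sub_le a s (by omega)).trans
      (one_div_two_pow_log_le_two_div (by omega))
  · exact (abs_interpRamp_apply_succ_sub_le a s (by omega)).trans
      (one_div_two_pow_log_le_two_div (by omega))
  · exact hs.trans (hr.monotone (Nat.lt_pow_succ_log_self one_lt_two k).le)

/-- given `1 ≤ r(1) < r(2) < ...` there exist functions
`t_k : ℕ → {0/2^k, 1/2^k, ..., 2^k/2^k}` (`k ≥ 1`) with the stated smallness of increments in
`k` and in `r`, monotone in `r`, vanishing for `r ≤ r(k)`, and eventually equal to `1`. -/
theorem stmt18 (r : ℕ → ℕ) (hr : StrictMono r) (hr1 : 1 ≤ r 1) :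
    ∃ t : ℕ → ℕ → ℝ,
      (∀ k, 1 ≤ k → ∀ s, ∃ j : ℕ, j ≤ 2 ^ k ∧ t k s = (j : ℝ) / 2 ^ k) ∧
      (∀ k, 1 ≤ k → ∀ s, |t (k + 1) s - t k s| ≤ 2 / (k : ℝ)) ∧
      (∀ k, 1 ≤ k → ∀ s, |t k (s + 1) - t k s| ≤ 2 / (k : ℝ)) ∧
      (∀ k, 1 ≤ k → ∀ s, t k s ≤ t k (s + 1)) ∧
      (∀ k, 1 ≤ k → ∀ s, s ≤ r k → t k s = 0) ∧
      (∀ k, 1 ≤ k → ∃ s₀, ∀ s, s₀ ≤ s → t k s = 1) :=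
  stmt18_general r hr
end

section
/- Let Y be a Banach space with an ℓᵖ decomposition Y₁,...,Yₙ and projections D₁,...,Dₙ (set D₀ = D_{n+1} = 0). Let T₁,...,T_{n+1} ∈ B(Y) with T₁ = T₂ and TᵢYⱼ ⊆ Y_{j−1} + Yⱼ + Y_{j+1} for all i, j ∈ {1,...,n} (Y₀ = Y_{n+1} = {0}). Then ‖∑_{j=1}^{n} DⱼTⱼ − ∑_{j=1}^{n} TⱼDⱼ‖ ≤ 3·sup_{2≤j≤n}(‖(T_{j−1}−Tⱼ)Dⱼ‖ + ‖(T_{j+1}−Tⱼ)Dⱼ‖). -/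
/-!
On `Yⱼ` the operator `S = ∑ DⱼTⱼ − ∑ TⱼDⱼ` acts as `D_{j-1}(T_{j-1} − Tⱼ)Dⱼ + D_{j+1}(T_{j+1} − Tⱼ)Dⱼ`
(zero for `j = 1` since `T₁ = T₂`), so it maps `Yⱼ` into `Y_{j-1} + Y_{j+1}` with norm at most `C`
there. Hence `S = P + Q`, where `P` and `Q` take block `j` only to block `j - 1`, resp. `j + 1`.
Since the block index shifts are injective, the `ℓᵖ` norm gives `‖P‖, ‖Q‖ ≤ C`, so `‖S‖ ≤ 2C ≤ 3C`.
-/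

open Finset

structure IsLpDecomposition {ι 𝕜 E : Type*} [NontriviallyNormedField 𝕜] [NormedAddCommGroup E]
    [NormedSpace 𝕜 E] (p : ℝ) (s : Finset ι) (D : ι → E →L[𝕜] E) : Prop where
  sum_apply : ∀ x, ∑ j ∈ s, D j x = x
  comp_of_ne : ∀ j k, j ≠ k → D j ∘L D k = 0
  norm_rpow : ∀ x, ‖x‖ ^ p = ∑ j ∈ s, ‖D j x‖ ^ p
  eq_zero_of_notMem : ∀ j ∉ s, D j = 0

def blockCommutator {ι 𝕜 E : Type*} [NontriviallyNormedField 𝕜] [NormedAddCommGroup E]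
    [NormedSpace 𝕜 E] (s : Finset ι) (D T : ι → E →L[𝕜] E) : E →L[𝕜] E :=
  ∑ j ∈ s, D j ∘L T j - ∑ j ∈ s, T j ∘L D j

namespace IsLpDecomposition

variable {ι 𝕜 E : Type*} [NontriviallyNormedField 𝕜] [NormedAddCommGroup E] [NormedSpace 𝕜 E]
  {p : ℝ} {s : Finset ι} {D : ι → E →L[𝕜] E}

theorem apply_apply_of_ne (hD : IsLpDecomposition p s D) {j k : ι} (h : j ≠ k) (x : E) :
    D j (D k x) = 0 := by
  simpa using DFunLike.congr_fun (hD.comp_of_ne j k h) x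

theorem apply_apply_self (hD : IsLpDecomposition p s D) (j : ι) (x : E) : D j (D j x) = D j x := by
  by_cases hj : j ∈ s
  · have h := hD.sum_apply (D j x)
    rwa [sum_eq_single_of_mem j hj fun k _ hk => hD.apply_apply_of_ne hk x] at h
  · simp [hD.eq_zero_of_notMem j hj]

theorem apply_sum (hD : IsLpDecomposition p s D) (y : ι → E) (k : ι) :
    D k (∑ i ∈ s, D i (y i)) = D k (y k) := by
  rw [map_sum, sum_eq_single k (fun i _ hi => hD.apply_apply_of_ne hi.symm _)
    (fun hk => by simp [hD.eq_zero_of_notMem k hk]), apply_apply_self hD]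

theorem norm_apply_le (hD : IsLpDecomposition p s D) (hp : 0 < p) (k : ι) (x : E) :
    ‖D k x‖ ≤ ‖x‖ := by
  by_cases hk : k ∈ s
  · rw [← Real.rpow_le_rpow_iff (norm_nonneg _) (norm_nonneg _) hp, hD.norm_rpow x]
    exact single_le_sum (f := fun j => ‖D j x‖ ^ p)
      (fun j _ => Real.rpow_nonneg (norm_nonneg _) p) hk
  · simp [hD.eq_zero_of_notMem k hk]

theorem norm_apply_apply_le (hD : IsLpDecomposition p s D) (hp : 0 < p) (A : E →L[𝕜] E)
    (j k : ι) (x : E) : ‖D k (A (D j x))‖ ≤ ‖A ∘L D j‖ * ‖D j x‖ := calc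
  ‖D k (A (D j x))‖ ≤ ‖(A ∘L D j) (D j x)‖ := by
    simpa only [ContinuousLinearMap.comp_apply, hD.apply_apply_self] using hD.norm_apply_le hp k _
  _ ≤ ‖A ∘L D j‖ * ‖D j x‖ := (A ∘L D j).le_opNorm _

theorem sum_rpow_norm_apply_comp_le (hD : IsLpDecomposition p s D) (hp : 0 < p) {m : ι → ι}
    (hm : Set.InjOn m s) (x : E) : ∑ k ∈ s, ‖D (m k) x‖ ^ p ≤ ‖x‖ ^ p := by
  classical
  have hzero : ∀ j ∈ s.image m, j ∉ s → ‖D j x‖ ^ p = 0 := fun j _ hj => by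
    simp [hD.eq_zero_of_notMem j hj, Real.zero_rpow hp.ne']
  calc ∑ k ∈ s, ‖D (m k) x‖ ^ p = ∑ j ∈ s.image m, ‖D j x‖ ^ p :=
        (sum_image (f := fun j => ‖D j x‖ ^ p) hm).symm
    _ = ∑ j ∈ s.image m ∩ s, ‖D j x‖ ^ p :=
      (sum_subset inter_subset_left fun j hj hjs => hzero j hj (by simp_all)).symm
    _ ≤ ∑ j ∈ s, ‖D j x‖ ^ p := sum_le_sum_of_subset_of_nonneg inter_subset_right
      fun j _ _ => Real.rpow_nonneg (norm_nonneg _) p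
    _ = ‖x‖ ^ p := (hD.norm_rpow x).symm

theorem norm_sum_apply_comp_le (hD : IsLpDecomposition p s D) (hp : 0 < p) {C : ℝ} (hC : 0 ≤ C)
    {A : E →L[𝕜] E} (hA : ∀ j x, ‖A (D j x)‖ ≤ C * ‖D j x‖) {m : ι → ι} (hm : Set.InjOn m s)
    (x : E) : ‖∑ k ∈ s, D k (A (D (m k) x))‖ ≤ C * ‖x‖ := by
  rw [← Real.rpow_le_rpow_iff (norm_nonneg _) (by positivity) hp]
  calc ‖∑ k ∈ s, D k (A (D (m k) x))‖ ^ p = ∑ k ∈ s, ‖D k (A (D (m k) x))‖ ^ p := by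
        rw [hD.norm_rpow]
        exact sum_congr rfl fun k _ => by rw [hD.apply_sum]
    _ ≤ ∑ k ∈ s, C ^ p * ‖D (m k) x‖ ^ p := sum_le_sum fun k _ => by
        rw [← Real.mul_rpow hC (norm_nonneg _)]
        exact Real.rpow_le_rpow (norm_nonneg _) ((hD.norm_apply_le hp k _).trans (hA _ x)) hp.le
    _ ≤ C ^ p * ‖x‖ ^ p := by
        rw [← mul_sum]
        exact mul_le_mul_of_nonneg_left (hD.sum_rpow_norm_apply_comp_le hp hm x)
          (Real.rpow_nonneg hC p)
    _ = (C * ‖x‖) ^ p := (Real.mul_rpow hC (norm_nonneg x)).symm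

theorem blockCommutator_apply_apply (hD : IsLpDecomposition p s D) (T : ι → E →L[𝕜] E) (j : ι)
    (x : E) : blockCommutator s D T (D j x) = ∑ i ∈ s, D i ((T i - T j) (D j x)) := by
  have hdiag : ∑ i ∈ s, T i (D i (D j x)) = T j (D j x) := by
    rw [sum_eq_single j (fun i _ hi => by rw [hD.apply_apply_of_ne hi, map_zero])
      (fun hj => by simp [hD.eq_zero_of_notMem j hj]), hD.apply_apply_self]
  simp only [blockCommutator, _root_.sub_apply, _root_.sum_apply,
    ContinuousLinearMap.comp_apply, map_sub, sum_sub_distrib, hdiag, hD.sum_apply]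

end IsLpDecomposition

namespace IsLpDecomposition

variable {E : Type*} [NormedAddCommGroup E] [NormedSpace ℂ E] {p : ℝ} {n : ℕ}
  {D : ℕ → E →L[ℂ] E}

theorem norm_le_two_mul_of_offDiagonal (hD : IsLpDecomposition p (Icc 1 n) D) (hp : 0 < p)
    {S : E →L[ℂ] E} {C : ℝ} (hC : 0 ≤ C)
    (hoff : ∀ j k x, k + 1 ≠ j → j + 1 ≠ k → D k (S (D j x)) = 0)
    (hS : ∀ j x, ‖S (D j x)‖ ≤ C * ‖D j x‖) : ‖S‖ ≤ 2 * C := by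
  refine S.opNorm_le_bound (by positivity) fun x => ?_
  have hsplit : S x = ∑ k ∈ Icc 1 n, D k (S (D (k + 1) x)) +
      ∑ k ∈ Icc 1 n, D k (S (D (k - 1) x)) := calc
    S x = ∑ k ∈ Icc 1 n, D k (S (∑ j ∈ Icc 1 n, D j x)) := by
      rw [hD.sum_apply x, hD.sum_apply (S x)]
    _ = ∑ k ∈ Icc 1 n, (D k (S (D (k + 1) x)) + D k (S (D (k - 1) x))) :=
      sum_congr rfl fun k hk => by
        rw [mem_Icc] at hk
        rw [map_sum, map_sum]
        exact sum_eq_add _ _ (by omega) (fun j _ hj => hoff j k x (by omega) (by omega))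
          (fun h => by simp [hD.eq_zero_of_notMem _ h])
          (fun h => by simp [hD.eq_zero_of_notMem _ h])
    _ = _ := sum_add_distrib
  have hup : Set.InjOn (· + 1) (Icc 1 n : Set ℕ) := fun a _ b _ h => by simpa using h
  have hdown : Set.InjOn (· - 1) (Icc 1 n : Set ℕ) := fun a ha b hb h => by
    simp only [coe_Icc, Set.mem_Icc] at ha hb h
    omega
  calc ‖S x‖ ≤ C * ‖x‖ + C * ‖x‖ := hsplit ▸ (norm_add_le _ _).trans
        (add_le_add (hD.norm_sum_apply_comp_le hp hC hS hup x)
          (hD.norm_sum_apply_comp_le hp hC hS hdown x))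
    _ = 2 * C * ‖x‖ := by ring

variable {T : ℕ → E →L[ℂ] E}
  (htri : ∀ i ∈ Icc 1 n, ∀ j ∈ Icc 1 n, ∀ k : ℕ,
    (k + 1 < j ∨ j + 1 < k) → D k ∘L (T i ∘L D j) = 0)
include htri

theorem blockCommutator_apply_apply_eq (hD : IsLpDecomposition p (Icc 1 n) D) {j : ℕ}
    (hj : j ∈ Icc 1 n) (x : E) :
    blockCommutator (Icc 1 n) D T (D j x) =
      D (j - 1) ((T (j - 1) - T j) (D j x)) + D (j + 1) ((T (j + 1) - T j) (D j x)) := by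
  rw [hD.blockCommutator_apply_apply]
  refine sum_eq_add _ _ (by rw [mem_Icc] at hj; omega) (fun i hi hij => ?_)
    (fun h => by simp [hD.eq_zero_of_notMem _ h]) (fun h => by simp [hD.eq_zero_of_notMem _ h])
  rcases eq_or_ne i j with rfl | hne
  · simp
  have hfar : i + 1 < j ∨ j + 1 < i := by rw [mem_Icc] at hi hj; omega
  have hT : ∀ l ∈ Icc 1 n, D i (T l (D j x)) = 0 := fun l hl => by
    simpa using DFunLike.congr_fun (htri l hl j hj i hfar) x
  rw [_root_.sub_apply, map_sub, hT i hi, hT j hj, sub_zero]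

theorem norm_blockCommutator_apply_le (hD : IsLpDecomposition p (Icc 1 n) D) (hp : 0 < p)
    (hT12 : T 1 = T 2) {C : ℝ} (hC : 0 ≤ C)
    (hbound : ∀ j, 2 ≤ j → j ≤ n → ‖(T (j - 1) - T j) ∘L D j‖ + ‖(T (j + 1) - T j) ∘L D j‖ ≤ C)
    (j : ℕ) (x : E) : ‖blockCommutator (Icc 1 n) D T (D j x)‖ ≤ C * ‖D j x‖ := by
  by_cases hj : j ∈ Icc 1 n
  swap
  · simp [hD.eq_zero_of_notMem j hj]
  rw [hD.blockCommutator_apply_apply_eq htri hj]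
  obtain rfl | hj2 : j = 1 ∨ 2 ≤ j := by rw [mem_Icc] at hj; omega
  · simpa [hD.eq_zero_of_notMem 0 (by simp), hT12] using mul_nonneg hC (norm_nonneg (D 1 x))
  calc _ ≤ ‖(T (j - 1) - T j) ∘L D j‖ * ‖D j x‖ + ‖(T (j + 1) - T j) ∘L D j‖ * ‖D j x‖ :=
        (norm_add_le _ _).trans (add_le_add (hD.norm_apply_apply_le hp _ _ _ x)
          (hD.norm_apply_apply_le hp _ _ _ x))
    _ ≤ C * ‖D j x‖ := by
        rw [← add_mul]
        exact mul_le_mul_of_nonneg_right (hbound j hj2 (mem_Icc.mp hj).2) (norm_nonneg _)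

end IsLpDecomposition

theorem stmt19_general (p : ℝ) (hp : 1 < p)
    (Y : Type) [NormedAddCommGroup Y] [NormedSpace ℂ Y]
    (n : ℕ)
    (D : ℕ → (Y →L[ℂ] Y))
    (hD0 : ∀ j, (j = 0 ∨ n < j) → D j = 0)
    (hsum : ∀ x : Y, ∑ j ∈ Finset.Icc 1 n, D j x = x)
    (horth : ∀ j k, j ≠ k → D j ∘L D k = 0)
    (hnorm : ∀ x : Y, ‖x‖ ^ p = ∑ j ∈ Finset.Icc 1 n, ‖D j x‖ ^ p)
    (T : ℕ → (Y →L[ℂ] Y))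
    (hT12 : T 1 = T 2)
    (htri : ∀ i ∈ Finset.Icc 1 n, ∀ j ∈ Finset.Icc 1 n, ∀ k : ℕ,
      (k + 1 < j ∨ j + 1 < k) → D k ∘L (T i ∘L D j) = 0) :
    ∀ Cb : ℝ, 0 ≤ Cb →
      (∀ j, 2 ≤ j → j ≤ n →
        ‖(T (j - 1) - T j) ∘L D j‖ + ‖(T (j + 1) - T j) ∘L D j‖ ≤ Cb) →
      ‖(∑ j ∈ Finset.Icc 1 n, D j ∘L T j) - ∑ j ∈ Finset.Icc 1 n, T j ∘L D j‖ ≤ 3 * Cb := by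
  intro Cb hCb hbound
  have hp0 : 0 < p := zero_lt_one.trans hp
  have hD : IsLpDecomposition p (Icc 1 n) D :=
    ⟨hsum, horth, hnorm, fun j hj => hD0 j (by rw [mem_Icc] at hj; omega)⟩
  have hoff : ∀ j k x, k + 1 ≠ j → j + 1 ≠ k →
      D k (blockCommutator (Icc 1 n) D T (D j x)) = 0 := fun j k x hkj hjk => by
    by_cases hj : j ∈ Icc 1 n
    · rw [mem_Icc] at hj
      rw [hD.blockCommutator_apply_apply_eq htri (mem_Icc.mpr hj), map_add,
        hD.apply_apply_of_ne (by omega), hD.apply_apply_of_ne (by omega), add_zero]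
    · simp [hD.eq_zero_of_notMem j hj]
  calc _ ≤ 2 * Cb := hD.norm_le_two_mul_of_offDiagonal hp0 hCb hoff
        (hD.norm_blockCommutator_apply_le htri hp0 hT12 hCb hbound)
    _ ≤ 3 * Cb := by linarith

/-- Let `Y` have an ℓᵖ decomposition `Y₁,...,Yₙ` with projections `D₁,...,Dₙ`
(`D₀ = D_{n+1} = 0`), and let `T₁,...,T_{n+1}` be operators with `T₁ = T₂` and each `Tᵢ`
block-tridiagonal (`TᵢYⱼ ⊆ Y_{j−1}+Yⱼ+Y_{j+1}`, i.e. `D_k Tᵢ D_j = 0` for `|k−j| > 1`),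
for `i, j ∈ {1,...,n}`. Then
`‖∑ⱼ DⱼTⱼ − ∑ⱼ TⱼDⱼ‖ ≤ 3·sup_{2≤j≤n}(‖(T_{j−1}−Tⱼ)Dⱼ‖ + ‖(T_{j+1}−Tⱼ)Dⱼ‖)`,
phrased via an arbitrary upper bound `Cb` of that family. -/
theorem stmt19 (p : ℝ) (hp : 1 < p)
    (Y : Type) [NormedAddCommGroup Y] [NormedSpace ℂ Y]
    (n : ℕ) (hn : 1 ≤ n)
    (D : ℕ → (Y →L[ℂ] Y))
    (hD0 : ∀ j, (j = 0 ∨ n < j) → D j = 0)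
    (hsum : ∀ x : Y, ∑ j ∈ Finset.Icc 1 n, D j x = x)
    (horth : ∀ j k, j ≠ k → D j ∘L D k = 0)
    (hnorm : ∀ x : Y, ‖x‖ ^ p = ∑ j ∈ Finset.Icc 1 n, ‖D j x‖ ^ p)
    (T : ℕ → (Y →L[ℂ] Y))
    (hT12 : T 1 = T 2)
    (htri : ∀ i ∈ Finset.Icc 1 n, ∀ j ∈ Finset.Icc 1 n, ∀ k : ℕ,
      (k + 1 < j ∨ j + 1 < k) → D k ∘L (T i ∘L D j) = 0) :
    ∀ Cb : ℝ, 0 ≤ Cb →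
      (∀ j, 2 ≤ j → j ≤ n →
        ‖(T (j - 1) - T j) ∘L D j‖ + ‖(T (j + 1) - T j) ∘L D j‖ ≤ Cb) →
      ‖(∑ j ∈ Finset.Icc 1 n, D j ∘L T j) - ∑ j ∈ Finset.Icc 1 n, T j ∘L D j‖ ≤ 3 * Cb :=
  stmt19_general p hp Y n D hD0 hsum horth hnorm T hT12 htri
end
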